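/- arXiv:2108.08804 — 8 statements merged into one kernel-verified Lean document; each statement's English description precedes it below -/
import Mathlib

section
/- Let m, r, d be positive integers with m ≥ (r-1)(d+1)+1, and let x_1, x_2, ..., x_m be points in ℝ^d. Then there is a partition S_1, S_2, ..., S_r of the index set {1, 2, ..., m} into r pairwise disjoint parts such that the convex hulls conv{x_i : i ∈ S_1}, ..., conv{x_i : i ∈ S_r} have a point in common. -/
/-!
Sarkaria's tensor trick reduces the theorem to Bárány's colorful Carathéodory theorem. Write
`r = e + 1` and let `v₀, …, v_e ∈ ℝᵉ` be vectors whose only linear relations have equal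
coefficients. Lift the point `xᵢ` to the `r` points `(xᵢ, 1) ⊗ vⱼ` of a space of dimension
`e (d + 1) < m`; each such color class has `0` in its convex hull, so some transversal
`(xᵢ, 1) ⊗ v_{c(i)}` does too. Grouping its weights by color, the sums `∑_{c(i) = j} lᵢ (xᵢ, 1)`
must then be independent of `j`, and so the parts `{i | c(i) = j}` share a center of mass.

For colorful Carathéodory, take `P` of least norm in the union of the convex hulls of all
transversals. If `P ≠ 0`, it lies on the hyperplane `⟪P, ·⟫ = ‖P‖²` supporting its transversal's
hull, so by Carathéodory it is a positive combination of at most `dim` affinely independent points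
of that transversal. Some color is then unused, and swapping in a point of that color with
`⟪P, ·⟫ ≤ 0` gives a transversal whose hull contains a point shorter than `P`.
-/

open Finset Module Set
open scoped RealInnerProductSpace

section Module

variable {V : Type*} [AddCommGroup V] [Module ℝ V]

lemma exists_weights_of_mem_convexHull_range {ι : Type*} [Fintype ι] {v : ι → V} {x : V}
    (hx : x ∈ convexHull ℝ (range v)) :
    ∃ w : ι → ℝ, (∀ i, 0 ≤ w i) ∧ ∑ i, w i = 1 ∧ ∑ i, w i • v i = x := by
  classical
  rw [convexHull_range_eq_exists_affineCombination] at hx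
  obtain ⟨s, w, hw₀, hw₁, rfl⟩ := hx
  have hw₁' : ∑ i, (s : Set ι).indicator w i = 1 := by
    rwa [Finset.sum_indicator_subset _ s.subset_univ]
  refine ⟨(s : Set ι).indicator w, Set.indicator_nonneg hw₀, hw₁', ?_⟩
  rw [Finset.affineCombination_indicator_subset _ _ s.subset_univ,
    Finset.affineCombination_eq_linear_combination _ _ _ hw₁']

lemma apply_eq_of_le_of_apply_sum_smul_eq {ι : Type*} [Fintype ι] (φ : V →ₗ[ℝ] ℝ)
    {w : ι → ℝ} {z : ι → V} {a : ℝ} (hw₀ : ∀ i, 0 < w i) (hw₁ : ∑ i, w i = 1)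
    (hle : ∀ i, a ≤ φ (z i)) (hsum : φ (∑ i, w i • z i) = a) (i : ι) : φ (z i) = a := by
  have hsum' : ∑ i, w i * a = ∑ i, w i * φ (z i) := by
    rw [← Finset.sum_mul, hw₁, one_mul, ← hsum, map_sum]
    simp only [map_smul, smul_eq_mul]
  have := (Finset.sum_eq_sum_iff_of_le fun i _ =>
    mul_le_mul_of_nonneg_left (hle i) (hw₀ i).le).1 hsum' i (mem_univ i)
  exact (mul_left_cancel₀ (hw₀ i).ne' this).symm

lemma AffineIndependent.linearIndependent_of_apply_eq {ι : Type*} {p : ι → V}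
    (hp : AffineIndependent ℝ p) (φ : V →ₗ[ℝ] ℝ) {a : ℝ} (ha : a ≠ 0)
    (hφ : ∀ i, φ (p i) = a) : LinearIndependent ℝ p := by
  refine linearIndependent_iff'.2 fun s g hg => hp.eq_zero_of_sum_eq_zero ?_ hg
  have := congrArg φ hg
  simp only [map_sum, map_smul, hφ, smul_eq_mul, map_zero, ← Finset.sum_mul] at this
  exact (mul_eq_zero.1 this).resolve_right ha

lemma LinearEquiv.zero_mem_convexHull_range_iff {W : Type*} [AddCommGroup W] [Module ℝ W]
    (L : V ≃ₗ[ℝ] W) {ι : Type*} (v : ι → V) :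
    0 ∈ convexHull ℝ (range (L ∘ v)) ↔ 0 ∈ convexHull ℝ (range v) := by
  rw [Set.range_comp, ← map_zero L]
  exact (L.toLinearMap.image_convexHull (range v)).symm ▸ L.injective.mem_set_image

end Module

section InnerProductSpace

variable {F : Type*} [NormedAddCommGroup F] [InnerProductSpace ℝ F]

lemma sq_norm_le_inner_of_isMinOn {K : Set F} (hK : Convex ℝ K) {p z : F} (hp : p ∈ K)
    (hmin : IsMinOn (‖·‖) K p) (hz : z ∈ K) : ‖p‖ ^ 2 ≤ ⟪p, z⟫ := by
  have hinf : ‖0 - p‖ = ⨅ w : K, ‖0 - (w : F)‖ := by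
    simp only [zero_sub, norm_neg]
    exact (hmin.iInf_eq hp).symm
  have := (norm_eq_iInf_iff_real_inner_le_zero hK hp).1 hinf z hz
  rw [zero_sub, inner_neg_left, inner_sub_right, real_inner_self_eq_norm_sq] at this
  linarith

lemma exists_inner_nonpos_of_zero_mem_convexHull {ι : Type*} {v : ι → F}
    (h : 0 ∈ convexHull ℝ (range v)) (P : F) : ∃ i, ⟪P, v i⟫ ≤ 0 := by
  by_contra! hpos
  have hsub : convexHull ℝ (range v) ⊆ {y | 0 < ⟪P, y⟫} :=
    convexHull_min (range_subset_iff.2 hpos) (convex_halfSpace_gt (innerₗ F P).isLinear 0)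
  simpa using hsub h

theorem exists_zero_mem_convexHull_transversal_of_inner [FiniteDimensional ℝ F]
    {ι κ : Type*} [Fintype ι] [Fintype κ] (hcard : finrank ℝ F < Fintype.card ι)
    (f : ι → κ → F) (hf : ∀ i, 0 ∈ convexHull ℝ (range (f i))) :
    ∃ c : ι → κ, 0 ∈ convexHull ℝ (range fun i => f i (c i)) := by
  classical
  set T : (ι → κ) → Set F := fun c => convexHull ℝ (range fun i => f i (c i))
  have hT : IsCompact (⋃ c, T c) :=
    isCompact_iUnion fun c => (finite_range _).isCompact_convexHull (𝕜 := ℝ)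
  have hT₀ : (⋃ c, T c).Nonempty := by
    obtain ⟨i₀⟩ : Nonempty ι := Fintype.card_pos_iff.1 ((Nat.zero_le _).trans_lt hcard)
    obtain ⟨_, j₀, -⟩ := convexHull_nonempty_iff.1 ⟨0, hf i₀⟩
    exact ⟨_, mem_iUnion.2 ⟨fun _ => j₀, subset_convexHull ℝ _ (mem_range_self i₀)⟩⟩
  obtain ⟨P, hPT, hPmin⟩ := hT.exists_isMinOn hT₀ continuous_norm.continuousOn
  obtain ⟨c₀, hP⟩ := mem_iUnion.1 hPT
  by_contra! h0
  have hP₀ : 0 < ‖P‖ ^ 2 := by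
    have : P ≠ 0 := fun h => h0 c₀ (h ▸ hP)
    positivity
  have hle : ∀ c, P ∈ T c → ∀ z ∈ T c, ‖P‖ ^ 2 ≤ ⟪P, z⟫ := fun c hPc _ hz =>
    sq_norm_le_inner_of_isMinOn (convex_convexHull ℝ _) hPc
      (hPmin.on_subset (subset_iUnion T c)) hz
  obtain ⟨τ, _, z, w, hz, hz_ai, hw₀, hw₁, hwz⟩ := eq_pos_convex_span_of_mem_convexHull hP
  have hzP : ∀ t, innerₗ F P (z t) = ‖P‖ ^ 2 :=
    apply_eq_of_le_of_apply_sum_smul_eq (innerₗ F P) hw₀ hw₁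
      (fun t => hle c₀ hP _ (subset_convexHull ℝ _ (hz ⟨t, rfl⟩)))
      (by rw [hwz, innerₗ_apply_apply, real_inner_self_eq_norm_sq])
  have hτ : Fintype.card τ < Fintype.card ι :=
    ((hz_ai.linearIndependent_of_apply_eq (innerₗ F P) hP₀.ne' hzP).fintype_card_le_finrank
      ).trans_lt hcard
  choose ψ hψ using fun t => hz ⟨t, rfl⟩
  obtain ⟨i₀, hi₀⟩ : ∃ i₀, ∀ t, ψ t ≠ i₀ := by
    by_contra! h
    exact hτ.not_ge (Fintype.card_le_of_surjective ψ h)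
  obtain ⟨j₀, hj₀⟩ := exists_inner_nonpos_of_zero_mem_convexHull (hf i₀) P
  set c₁ := Function.update c₀ i₀ j₀
  have hPc₁ : P ∈ T c₁ := by
    refine mem_convexHull_of_exists_fintype w z (fun t => (hw₀ t).le) hw₁
      (fun t => ⟨ψ t, ?_⟩) hwz
    simp [c₁, Function.update_of_ne (hi₀ t), hψ]
  have := hle c₁ hPc₁ (f i₀ j₀) (subset_convexHull ℝ _ ⟨i₀, by simp [c₁]⟩)
  linarith

end InnerProductSpace

theorem exists_zero_mem_convexHull_transversal {V : Type*} [AddCommGroup V] [Module ℝ V]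
    [FiniteDimensional ℝ V] {ι κ : Type*} [Fintype ι] [Fintype κ]
    (hcard : finrank ℝ V < Fintype.card ι) (f : ι → κ → V)
    (hf : ∀ i, 0 ∈ convexHull ℝ (range (f i))) :
    ∃ c : ι → κ, 0 ∈ convexHull ℝ (range fun i => f i (c i)) := by
  let L : V ≃ₗ[ℝ] EuclideanSpace ℝ (Fin (finrank ℝ V)) :=
    (Module.finBasis ℝ V).equivFun.trans (WithLp.linearEquiv 2 ℝ _).symm
  obtain ⟨c, hc⟩ := exists_zero_mem_convexHull_transversal_of_inner (by simpa using hcard)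
    (fun i j => L (f i j)) fun i => (L.zero_mem_convexHull_range_iff (f i)).2 (hf i)
  exact ⟨c, (L.zero_mem_convexHull_range_iff fun i => f i (c i)).1 hc⟩

section Sarkaria

variable {E : Type*} [AddCommGroup E] [Module ℝ E] {e : ℕ}

/-- The standard basis of `ℝᵉ` followed by `-(1, …, 1)`: `e + 1` vectors whose only linear
relations have all coefficients equal. -/
def sarkariaVector (e : ℕ) : Fin (e + 1) → Fin e → ℝ :=
  Fin.lastCases (fun _ => -1) fun k => Pi.single k 1

lemma sum_sarkariaVector_smul {M : Type*} [AddCommGroup M] [Module ℝ M]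
    (y : Fin (e + 1) → M) (k : Fin e) :
    ∑ j, sarkariaVector e j k • y j = y k.castSucc - y (Fin.last e) := by
  simp [Fin.sum_univ_castSucc, sarkariaVector, Pi.single_apply, sub_eq_add_neg]

lemma eq_last_of_sum_sarkariaVector_smul_eq_zero {M : Type*} [AddCommGroup M] [Module ℝ M]
    {y : Fin (e + 1) → M} (h : ∀ k, ∑ j, sarkariaVector e j k • y j = 0) (j : Fin (e + 1)) :
    y j = y (Fin.last e) := by
  induction j using Fin.lastCases with
  | last => rfl
  | cast k => exact sub_eq_zero.1 (sum_sarkariaVector_smul y k ▸ h k)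

/-- The tensor `(x, 1) ⊗ vⱼ`, with `(E × ℝ) ⊗ ℝᵉ` realised as `Fin e → E × ℝ`. -/
def sarkariaLift (e : ℕ) (x : E) (j : Fin (e + 1)) : Fin e → E × ℝ :=
  fun k => sarkariaVector e j k • (x, 1)

lemma zero_mem_convexHull_range_sarkariaLift (e : ℕ) (x : E) :
    0 ∈ convexHull ℝ (range (sarkariaLift e x)) := by
  refine mem_convexHull_of_exists_fintype (fun _ => ((e : ℝ) + 1)⁻¹) _ (fun _ => by positivity)
    ?_ mem_range_self ?_
  · simp only [sum_const, card_univ, Fintype.card_fin, nsmul_eq_mul]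
    push_cast
    field_simp
  · ext1 k
    simp only [Finset.sum_apply, Pi.smul_apply, sarkariaLift, ← Finset.smul_sum,
      sum_sarkariaVector_smul (fun _ => ((x, 1) : E × ℝ)), sub_self, smul_zero, Pi.zero_apply]

lemma exists_mem_convexHull_fibers {ι κ : Type*} [Fintype ι] [Fintype κ] [DecidableEq κ]
    {x : ι → E} {c : ι → κ} {l : ι → ℝ} (hl₀ : ∀ i, 0 ≤ l i) (hl₁ : ∑ i, l i = 1)
    (h : ∀ j j', ∑ i with c i = j, l i • (x i, (1 : ℝ)) =
      ∑ i with c i = j', l i • (x i, (1 : ℝ))) :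
    ∃ p, ∀ j, p ∈ convexHull ℝ (x '' {i | c i = j}) := by
  have hmass : ∀ j j', ∑ i with c i = j, l i = ∑ i with c i = j', l i := fun j j' => by
    simpa [Prod.snd_sum] using congrArg Prod.snd (h j j')
  have hpos : ∀ j, 0 < ∑ i with c i = j, l i := by
    intro j
    refine (sum_nonneg fun i _ => hl₀ i).lt_of_ne fun h0 => ?_
    have := Finset.sum_fiberwise univ c l
    simp only [hmass _ j, ← h0, sum_const_zero, hl₁] at this
    exact zero_ne_one this
  obtain ⟨i₀⟩ : Nonempty ι := by
    by_contra! hι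
    simp at hl₁
  refine ⟨({i | c i = c i₀} : Finset ι).centerMass l x, fun j => ?_⟩
  have hcm : ({i | c i = j} : Finset ι).centerMass l x =
      ({i | c i = c i₀} : Finset ι).centerMass l x := by
    have hfst := congrArg Prod.fst (h j (c i₀))
    simp only [Prod.fst_sum, Prod.smul_fst] at hfst
    rw [Finset.centerMass, Finset.centerMass, hmass j (c i₀), hfst]
  rw [← hcm]
  simpa using centerMass_mem_convexHull _ (fun i _ => hl₀ i) (hpos j)
    (fun i hi => Set.mem_image_of_mem x (by simpa using hi))

theorem exists_tverberg_coloring [FiniteDimensional ℝ E] {ι : Type*} [Fintype ι]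
    (hcard : e * (finrank ℝ E + 1) < Fintype.card ι) (x : ι → E) :
    ∃ c : ι → Fin (e + 1), ∃ p, ∀ j, p ∈ convexHull ℝ (x '' {i | c i = j}) := by
  obtain ⟨c, hc⟩ := exists_zero_mem_convexHull_transversal
    (by simpa [Module.finrank_pi_fintype] using hcard)
    (fun i => sarkariaLift e (x i)) fun i => zero_mem_convexHull_range_sarkariaLift e (x i)
  obtain ⟨l, hl₀, hl₁, hl⟩ := exists_weights_of_mem_convexHull_range hc
  have hfib : ∀ k, ∑ j, sarkariaVector e j k • ∑ i with c i = j, l i • (x i, (1 : ℝ)) = 0 := by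
    intro k
    calc _ = ∑ j, ∑ i with c i = j, l i • sarkariaLift e (x i) (c i) k := by
          refine sum_congr rfl fun j _ => ?_
          rw [Finset.smul_sum]
          refine sum_congr rfl fun i hi => ?_
          rw [(mem_filter.1 hi).2, sarkariaLift, smul_comm]
      _ = (∑ i, l i • sarkariaLift e (x i) (c i)) k := by
          rw [sum_fiberwise, Finset.sum_apply]
          rfl
      _ = 0 := by rw [hl]; rfl
  refine ⟨c, exists_mem_convexHull_fibers hl₀ hl₁ fun j j' => ?_⟩
  rw [eq_last_of_sum_sarkariaVector_smul_eq_zero hfib j,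
    eq_last_of_sum_sarkariaVector_smul_eq_zero hfib j']

end Sarkaria

theorem tverberg_general (m r d : ℕ) (hr : 0 < r)
    (h : (r - 1) * (d + 1) + 1 ≤ m)
    (x : Fin m → EuclideanSpace ℝ (Fin d)) :
    ∃ S : Fin r → Finset (Fin m),
      (∀ i j : Fin r, i ≠ j → Disjoint (S i) (S j)) ∧
      (Finset.univ.biUnion S = Finset.univ) ∧
      ∃ p : EuclideanSpace ℝ (Fin d),
        ∀ j : Fin r, p ∈ convexHull ℝ (x '' (S j : Set (Fin m))) := by
  obtain ⟨e, rfl⟩ : ∃ e, r = e + 1 := ⟨r - 1, by omega⟩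
  obtain ⟨c, p, hp⟩ := exists_tverberg_coloring (by simpa using h) x
  refine ⟨fun j => {i | c i = j}, fun j j' hjj' => ?_, ?_, p, fun j => by simpa using hp j⟩
  · exact disjoint_filter.2 fun i _ hj hj' => hjj' (hj ▸ hj')
  · ext i
    simp

/-- **Tverberg's theorem.** If `m ≥ (r-1)(d+1)+1`, then any `m` points in `ℝ^d` can be
partitioned into `r` pairwise disjoint parts whose convex hulls have a point in common. -/
theorem tverberg (m r d : ℕ) (hm : 0 < m) (hr : 0 < r) (hd : 0 < d)
    (h : (r - 1) * (d + 1) + 1 ≤ m)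
    (x : Fin m → EuclideanSpace ℝ (Fin d)) :
    ∃ S : Fin r → Finset (Fin m),
      (∀ i j : Fin r, i ≠ j → Disjoint (S i) (S j)) ∧
      (Finset.univ.biUnion S = Finset.univ) ∧
      ∃ p : EuclideanSpace ℝ (Fin d),
        ∀ j : Fin r, p ∈ convexHull ℝ (x '' (S j : Set (Fin m))) :=
  tverberg_general m r d hr h x
end

section
/- Let S_1, S_2, ..., S_{d+1} be subsets of ℝ^d and let x be a point with x ∈ conv S_i for every i = 1, ..., d+1. Then there exist points x_1 ∈ S_1, x_2 ∈ S_2, ..., x_{d+1} ∈ S_{d+1} such that x ∈ conv{x_1, ..., x_{d+1}}. -/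
/-!
Among all transversals `y` of finite subsets of the colours, pick one whose convex hull `K` is
closest to `x`, and suppose `x ∉ K`. Let `z` be the point of `K` nearest to `x` and `v = x - z`.
Then `⟪v, ·⟫ ≤ ⟪v, z⟫` on `K`, so `z` lies in the convex hull of the points of `y` on the
hyperplane `⟪v, ·⟫ = ⟪v, z⟫`, and by Carathéodory in that hyperplane already in the hull of at
most `d` of them. Some colour `j` is thus not needed for `z`; since `x ∈ conv S j` lies strictly
beyond the hyperplane, so does some `p ∈ S j`, and replacing `y j` by `p` gives a hull containing
the segment `[z, p]`, which comes strictly closer to `x`.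
-/

open Set Finset Metric Module
open scoped RealInnerProductSpace

theorem AffineIndependent.card_le_finrank_of_forall_apply_eq {k V ι : Type*} [Field k]
    [AddCommGroup V] [Module k V] [FiniteDimensional k V] [Fintype ι] {p : ι → V}
    (hp : AffineIndependent k p) {f : V →ₗ[k] k} (hf : f ≠ 0) {c : k} (hpf : ∀ i, f (p i) = c) :
    Fintype.card ι ≤ finrank k V := by
  have hspan : vectorSpan k (range p) ≤ LinearMap.ker f := by
    rw [vectorSpan_def, Submodule.span_le]
    rintro _ ⟨_, ⟨i, rfl⟩, _, ⟨j, rfl⟩, rfl⟩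
    simp [hpf]
  have hker : finrank k (LinearMap.ker f) < finrank k V :=
    Submodule.finrank_lt (by rwa [Ne, LinearMap.ker_eq_top])
  calc Fintype.card ι ≤ finrank k (vectorSpan k (range p)) + 1 := hp.card_le_finrank_succ
    _ ≤ finrank k (LinearMap.ker f) + 1 := by gcongr; exact Submodule.finrank_mono hspan
    _ ≤ finrank k V := hker

theorem exists_finset_card_le_finrank_of_mem_convexHull {𝕜 E : Type*} [Field 𝕜] [LinearOrder 𝕜]
    [IsStrictOrderedRing 𝕜] [AddCommGroup E] [Module 𝕜 E] [FiniteDimensional 𝕜 E] {s : Set E}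
    {f : E →ₗ[𝕜] 𝕜} (hf : f ≠ 0) {c : 𝕜} (hs : ∀ w ∈ s, f w ≤ c) {z : E}
    (hz : z ∈ convexHull 𝕜 s) (hfz : f z = c) :
    ∃ t : Finset E, ↑t ⊆ s ∧ #t ≤ finrank 𝕜 E ∧ z ∈ convexHull 𝕜 (t : Set E) := by
  classical
  obtain ⟨ι, _, p, w, hps, hp, hw0, hw1, hwz⟩ := eq_pos_convex_span_of_mem_convexHull hz
  have hpf : ∀ i, f (p i) = c := by
    have hslack : ∑ i, w i * (c - f (p i)) = 0 := calc
      _ = (∑ i, w i) * c - f (∑ i, w i • p i) := by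
        simp [mul_sub, Finset.sum_sub_distrib, Finset.sum_mul]
      _ = 0 := by rw [hw1, hwz, hfz, one_mul, sub_self]
    intro i
    have hterm := (Finset.sum_eq_zero_iff_of_nonneg fun i _ ↦
      mul_nonneg (hw0 i).le (sub_nonneg.2 (hs _ (hps ⟨i, rfl⟩)))).1 hslack i (mem_univ i)
    linarith [(mul_eq_zero.1 hterm).resolve_left (hw0 i).ne']
  refine ⟨univ.image p, by simpa using hps, ?_, ?_⟩
  · exact card_image_le.trans (hp.card_le_finrank_of_forall_apply_eq hf hpf)
  · exact mem_convexHull_of_exists_fintype w p (fun i ↦ (hw0 i).le) hw1 (by simp) hwz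

theorem exists_forall_mem_convexHull_range_update {𝕜 E ι : Type*} [Field 𝕜] [LinearOrder 𝕜]
    [IsStrictOrderedRing 𝕜] [AddCommGroup E] [Module 𝕜 E] [FiniteDimensional 𝕜 E] [Fintype ι]
    [DecidableEq ι] (hcard : finrank 𝕜 E < Fintype.card ι) {y : ι → E} {f : E →ₗ[𝕜] 𝕜}
    (hf : f ≠ 0) {z : E} (hfy : ∀ i, f (y i) ≤ f z) (hz : z ∈ convexHull 𝕜 (range y)) :
    ∃ j, ∀ p, z ∈ convexHull 𝕜 (range (Function.update y j p)) := by
  classical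
  obtain ⟨t, hty, htcard, hzt⟩ :=
    exists_finset_card_le_finrank_of_mem_convexHull hf (forall_mem_range.2 hfy) hz rfl
  obtain ⟨I, -, hinj, rfl⟩ := exists_subset_injOn_image_eq_of_surjOn Set.univ t
    (fun w hw ↦ by simpa using hty hw)
  obtain ⟨j, -, hj⟩ := exists_mem_notMem_of_card_lt_card (s := I) (t := Finset.univ)
    (by rw [card_univ, ← card_image_of_injOn hinj]; omega)
  refine ⟨j, fun p ↦ convexHull_mono ?_ hzt⟩
  rintro _ hw
  obtain ⟨i, hi, rfl⟩ := by simpa using hw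
  exact ⟨i, Function.update_of_ne (ne_of_mem_of_not_mem hi hj) _ _⟩

section InnerProductSpace

variable {E : Type*} [NormedAddCommGroup E] [InnerProductSpace ℝ E]

theorem Convex.inner_sub_nonpos_of_norm_sub_eq_infDist {K : Set E} (hK : Convex ℝ K) {x z w : E}
    (hz : z ∈ K) (hxz : ‖x - z‖ = infDist x K) (hw : w ∈ K) : ⟪x - z, w - z⟫ ≤ 0 :=
  (norm_eq_iInf_iff_real_inner_le_zero hK hz).1
    (by simp only [hxz, infDist_eq_iInf, dist_eq_norm]) w hw

theorem Convex.infDist_lt_norm_sub_of_inner_pos {K : Set E} (hK : Convex ℝ K) {x z p : E}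
    (hz : z ∈ K) (hp : p ∈ K) (hpos : 0 < ⟪x - z, p - z⟫) : infDist x K < ‖x - z‖ := by
  by_contra! hge
  have heq : ‖x - z‖ = infDist x K :=
    le_antisymm hge ((infDist_le_dist_of_mem hz).trans_eq (dist_eq_norm x z))
  exact (hK.inner_sub_nonpos_of_norm_sub_eq_infDist hz heq hp).not_gt hpos

variable [FiniteDimensional ℝ E] {ι : Type*} [Fintype ι]

theorem exists_transversal_infDist_convexHull_lt (hcard : finrank ℝ E < Fintype.card ι)
    {S : ι → Set E} {x : E} (hx : ∀ i, x ∈ convexHull ℝ (S i)) {y : ι → E}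
    (hy : ∀ i, y i ∈ S i) (hxy : x ∉ convexHull ℝ (range y)) :
    ∃ y' : ι → E, (∀ i, y' i ∈ S i) ∧
      infDist x (convexHull ℝ (range y')) < infDist x (convexHull ℝ (range y)) := by
  classical
  have : Nonempty ι := Fintype.card_pos_iff.1 (by omega)
  obtain ⟨z, hzK, hz⟩ := ((finite_range y).isCompact_convexHull ℝ).exists_infDist_eq_dist
    (convexHull_nonempty_iff.2 (range_nonempty y)) x
  rw [dist_eq_norm] at hz
  rw [hz]
  have hv : x - z ≠ 0 := sub_ne_zero.2 (by rintro rfl; exact hxy hzK)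
  let f := innerₗ E (x - z)
  have hfz : f z < f x := sub_pos.1 ((real_inner_self_pos.2 hv).trans_eq (map_sub f x z))
  have hfy (i : ι) : f (y i) ≤ f z := sub_nonpos.1 <| (map_sub f (y i) z).symm.trans_le <|
    (convex_convexHull ℝ _).inner_sub_nonpos_of_norm_sub_eq_infDist hzK hz.symm
      (subset_convexHull ℝ _ (mem_range_self i))
  obtain ⟨j, hzj⟩ := exists_forall_mem_convexHull_range_update hcard
    (fun h ↦ hfz.ne (by rw [h]; rfl)) hfy hzK
  obtain ⟨p, hpS, hxp⟩ :=
    (f.convexOn convex_univ).exists_ge_of_mem_convexHull (subset_univ _) (hx j)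
  refine ⟨Function.update y j p, fun i ↦ ?_, ?_⟩
  · rcases eq_or_ne i j with rfl | hij
    · simpa using hpS
    · simpa [hij] using hy i
  exact (convex_convexHull ℝ _).infDist_lt_norm_sub_of_inner_pos (hzj p)
    (subset_convexHull ℝ _ ⟨j, Function.update_self j p y⟩)
    ((sub_pos.2 (hfz.trans_le hxp)).trans_eq (map_sub f p z).symm)

theorem exists_transversal_mem_convexHull_of_finite (hcard : finrank ℝ E < Fintype.card ι)
    {S : ι → Set E} (hS : ∀ i, (S i).Finite) {x : E} (hx : ∀ i, x ∈ convexHull ℝ (S i)) :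
    ∃ y : ι → E, (∀ i, y i ∈ S i) ∧ x ∈ convexHull ℝ (range y) := by
  have hne : (univ.pi S).Nonempty :=
    univ_pi_nonempty_iff.2 fun i ↦ convexHull_nonempty_iff.1 ⟨x, hx i⟩
  obtain ⟨y, hy, hmin⟩ := Set.exists_min_image _
    (fun y ↦ infDist x (convexHull ℝ (range y))) (Set.Finite.pi hS) hne
  refine ⟨y, fun i ↦ hy i (mem_univ i), ?_⟩
  by_contra hxy
  obtain ⟨y', hy', hlt⟩ :=
    exists_transversal_infDist_convexHull_lt hcard hx (fun i ↦ hy i (mem_univ i)) hxy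
  exact (hmin y' fun i _ ↦ hy' i).not_gt hlt

theorem exists_transversal_mem_convexHull (hcard : finrank ℝ E < Fintype.card ι)
    {S : ι → Set E} {x : E} (hx : ∀ i, x ∈ convexHull ℝ (S i)) :
    ∃ y : ι → E, (∀ i, y i ∈ S i) ∧ x ∈ convexHull ℝ (range y) := by
  have hfin : ∀ i, ∃ t : Finset E, ↑t ⊆ S i ∧ x ∈ convexHull ℝ (t : Set E) := fun i ↦ by
    simpa using (convexHull_eq_union_convexHull_finite_subsets (S i)).subset (hx i)
  choose T hTS hxT using hfin
  obtain ⟨y, hyT, hy⟩ :=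
    exists_transversal_mem_convexHull_of_finite hcard (fun i ↦ (T i).finite_toSet) hxT
  exact ⟨y, fun i ↦ hTS i (hyT i), hy⟩

end InnerProductSpace

/-- **The colorful Carathéodory theorem** (Bárány). If `x` lies in the convex hull of each of
`d+1` sets `S 0, …, S d` in `ℝ^d`, then there is a transversal (rainbow set)
`x_i ∈ S i` with `x` in its convex hull. -/
theorem colorful_caratheodory (d : ℕ) (S : Fin (d + 1) → Set (EuclideanSpace ℝ (Fin d)))
    (x : EuclideanSpace ℝ (Fin d)) (hx : ∀ i, x ∈ convexHull ℝ (S i)) :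
    ∃ y : Fin (d + 1) → EuclideanSpace ℝ (Fin d),
      (∀ i, y i ∈ S i) ∧ x ∈ convexHull ℝ (Set.range y) :=
  exists_transversal_mem_convexHull (by simp) hx
end

section
/- Let C_1, ..., C_{d+1} be nonempty finite families of convex sets in ℝ^d with the property that for every choice K_1 ∈ C_1, K_2 ∈ C_2, ..., K_{d+1} ∈ C_{d+1} the intersection K_1 ∩ K_2 ∩ ... ∩ K_{d+1} is non-empty. Then there exists an index i ∈ {1,...,d+1} such that the intersection of all the members of C_i is non-empty. -/
/-!
Shrinking every set to the convex hull of finitely many witness points of the transversals, we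
may assume all sets compact. For each transversal take the lexicographically least point of its
intersection, and fix a transversal `T` for which this point `v` is lexicographically largest.
The sets of `T` have no common point in the convex set `{y | y <lex v}`, so by Helly's theorem
neither do the sets of `T` of all colours but some `j`. Replacing `T j` by any `A ∈ C j` can
therefore not lower the least point, nor raise it by the choice of `T`; so it is still `v`, and
`v ∈ A`.
-/

instance Pi.Lex.posSMulStrictMono {ι α β : Type*} [LinearOrder ι] [Zero α] [Preorder α]
    [PartialOrder β] [SMul α β] [PosSMulStrictMono α β] : PosSMulStrictMono α (Lex (ι → β)) where
  smul_lt_smul_of_pos_left a ha _ _ := fun ⟨i, hi, hlt⟩ =>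
    ⟨i, fun j hj => congrArg (a • ·) (hi j hj), smul_lt_smul_of_pos_left hlt ha⟩

theorem Fin.toLex_le_toLex_of_head_lt_or_tail_le {n : ℕ} {β : Type*} [LinearOrder β]
    {x y : Fin (n + 1) → β}
    (h : x 0 < y 0 ∨ x 0 = y 0 ∧ toLex (Fin.tail x) ≤ toLex (Fin.tail y)) :
    toLex x ≤ toLex y := by
  have key := Fin.pi_lex_lt_cons_cons (x₀ := x 0) (y₀ := y 0) (x := Fin.tail x) (y := Fin.tail y)
    (s := fun a b => a < b)
  simp only [Fin.cons_self_tail] at key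
  rcases h with h | ⟨h0, h⟩
  · exact le_of_lt (show toLex x < toLex y from key.2 (Or.inl h))
  rcases h.lt_or_eq with h | h
  · exact le_of_lt (show toLex x < toLex y from key.2 (Or.inr ⟨h0, h⟩))
  · rw [← Fin.cons_self_tail x, ← Fin.cons_self_tail y, h0, toLex.injective h]

theorem IsCompact.exists_forall_toLex_le {β : Type*} [TopologicalSpace β] [LinearOrder β]
    [OrderClosedTopology β] :
    ∀ {n : ℕ} {S : Set (Fin n → β)}, IsCompact S → S.Nonempty →
      ∃ x ∈ S, ∀ y ∈ S, toLex x ≤ toLex y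
  | 0, _, _, ⟨x, hx⟩ => ⟨x, hx, fun y _ => (congrArg toLex (Subsingleton.elim x y)).le⟩
  | n + 1, S, hS, hne => by
    obtain ⟨x₀, hx₀, hmin⟩ := hS.exists_isMinOn hne (continuous_apply 0).continuousOn
    let S₀ := S ∩ {y | y 0 = x₀ 0}
    have hS₀ : IsCompact S₀ := hS.inter_right (isClosed_eq (continuous_apply 0) continuous_const)
    obtain ⟨_, ⟨x, hx, rfl⟩, hx_min⟩ := (hS₀.image continuous_id.finTail).exists_forall_toLex_le
      ⟨_, Set.mem_image_of_mem _ ⟨hx₀, rfl⟩⟩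
    refine ⟨x, hx.1, fun y hy => Fin.toLex_le_toLex_of_head_lt_or_tail_le ?_⟩
    rw [hx.2]
    rcases (hmin hy : x₀ 0 ≤ y 0).lt_or_eq with h | h
    · exact Or.inl h
    · exact Or.inr ⟨h, hx_min _ (Set.mem_image_of_mem _ ⟨hy, h.symm⟩)⟩

theorem Convex.exists_disjoint_iInter_ne {𝕜 E ι : Type*} [Field 𝕜] [LinearOrder 𝕜]
    [IsStrictOrderedRing 𝕜] [AddCommGroup E] [Module 𝕜 E] [FiniteDimensional 𝕜 E] [Fintype ι]
    (hcard : Module.finrank 𝕜 E < Fintype.card ι) {K : ι → Set E} {H : Set E}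
    (hK : ∀ i, Convex 𝕜 (K i)) (hH : Convex 𝕜 H) (hne : (⋂ i, K i).Nonempty)
    (hdisj : Disjoint (⋂ i, K i) H) : ∃ j, Disjoint (⋂ i ≠ j, K i) H := by
  classical
  by_contra! h
  simp only [Set.not_disjoint_iff_nonempty_inter] at h
  let F : Option ι → Set E := fun o => o.elim H K
  obtain ⟨x, hx⟩ : (⋂ o ∈ (Finset.univ : Finset (Option ι)), F o).Nonempty := by
    refine helly_theorem' (𝕜 := 𝕜) (fun o _ => ?_) fun I _ hI => ?_
    · cases o
      exacts [hH, hK _]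
    by_cases hH_mem : none ∈ I
    · obtain ⟨o, -, ho⟩ := Finset.exists_mem_notMem_of_card_lt_card (s := I) (t := Finset.univ)
        (by simp only [Finset.card_univ, Fintype.card_option]; omega)
      obtain ⟨j, rfl⟩ := Option.ne_none_iff_exists'.1 (ne_of_mem_of_not_mem hH_mem ho).symm
      refine (h j).mono fun x hx => Set.mem_iInter₂.2 fun o ho' => ?_
      cases o with
      | none => exact hx.2
      | some i => exact Set.mem_iInter₂.1 hx.1 i (fun hij => ho (hij ▸ ho'))
    · refine hne.mono fun x hx => Set.mem_iInter₂.2 fun o ho => ?_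
      cases o with
      | none => exact absurd ho hH_mem
      | some i => exact Set.mem_iInter.1 hx i
  have hxF : ∀ o, x ∈ F o := fun o => Set.mem_iInter₂.1 hx o (Finset.mem_univ o)
  exact hdisj.notMem_of_mem_left (Set.mem_iInter.2 fun i => hxF (some i)) (hxF none)

theorem Set.Finite.exists_finite_forall_inter_nonempty {α : Type*} {𝒮 : Set (Set α)}
    (h𝒮 : 𝒮.Finite) (hne : ∀ s ∈ 𝒮, s.Nonempty) :
    ∃ W : Set α, W.Finite ∧ ∀ s ∈ 𝒮, (s ∩ W).Nonempty :=
  have := h𝒮.to_subtype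
  ⟨Set.range fun s : 𝒮 => (hne s s.2).some, Set.finite_range _,
    fun s hs => ⟨_, (hne s hs).some_mem, ⟨s, hs⟩, rfl⟩⟩

theorem colorful_helly_of_isCompact {d : ℕ} {ι : Type*} [Fintype ι] (hcard : d < Fintype.card ι)
    {C : ι → Finset (Set (EuclideanSpace ℝ (Fin d)))} (hne : ∀ i, (C i).Nonempty)
    (hconv : ∀ i, ∀ A ∈ C i, Convex ℝ A) (hcpt : ∀ i, ∀ A ∈ C i, IsCompact A)
    (htrans : ∀ K : ι → Set (EuclideanSpace ℝ (Fin d)),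
      (∀ i, K i ∈ C i) → (⋂ i, K i).Nonempty) :
    ∃ i, (⋂ A ∈ C i, A).Nonempty := by
  classical
  let lex : EuclideanSpace ℝ (Fin d) → Lex (Fin d → ℝ) := fun x => toLex (WithLp.ofLp x)
  have lex_injective : Function.Injective lex := toLex.injective.comp (WithLp.ofLp_injective 2)
  have : Nonempty ι := Fintype.card_pos_iff.1 (by omega)
  have : Nonempty (∀ i, {A // A ∈ C i}) := ⟨fun i => ⟨_, (hne i).choose_spec⟩⟩
  have hlex_min : ∀ T : ∀ i, {A // A ∈ C i}, ∃ v ∈ ⋂ i, (T i : Set _),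
      ∀ y ∈ ⋂ i, (T i : Set _), lex v ≤ lex y := by
    intro T
    obtain ⟨i₀⟩ := ‹Nonempty ι›
    have hT : IsCompact (⋂ i, (T i : Set (EuclideanSpace ℝ (Fin d)))) :=
      (hcpt i₀ _ (T i₀).2).of_isClosed_subset
        (isClosed_iInter fun i => (hcpt i _ (T i).2).isClosed) (Set.iInter_subset _ i₀)
    obtain ⟨_, ⟨v, hv, rfl⟩, hv_min⟩ :=
      (hT.image (PiLp.continuous_ofLp 2 _)).exists_forall_toLex_le
        ((htrans _ fun i => (T i).2).image _)
    exact ⟨v, hv, fun y hy => hv_min _ (Set.mem_image_of_mem _ hy)⟩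
  choose v hv_mem hv_min using hlex_min
  obtain ⟨Tm, hTm⟩ := Finite.exists_max (lex ∘ v)
  obtain ⟨j, hj⟩ := Convex.exists_disjoint_iInter_ne (K := fun i => (Tm i : Set _))
    (H := {y | lex y < lex (v Tm)}) (by rwa [finrank_euclideanSpace_fin])
    (fun i => hconv i _ (Tm i).2)
    ((convex_Iio (lex (v Tm))).is_linear_preimage ⟨fun _ _ => rfl, fun _ _ => rfl⟩)
    ⟨v Tm, hv_mem Tm⟩
    (Set.disjoint_left.2 fun y hy hlt => (hv_min Tm y hy).not_gt hlt)
  refine ⟨j, v Tm, Set.mem_iInter₂.2 fun A hA => ?_⟩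
  let T' := Function.update Tm j ⟨A, hA⟩
  have hT'_mem : ∀ i, v T' ∈ (T' i : Set _) := Set.mem_iInter.1 (hv_mem T')
  have hle : lex (v Tm) ≤ lex (v T') := not_lt.1 fun hlt => hj.notMem_of_mem_left
    (Set.mem_iInter₂.2 fun i hi => by simpa [T', hi] using hT'_mem i) hlt
  have heq : v T' = v Tm := lex_injective (le_antisymm (hTm T') hle)
  simpa [T', heq] using hT'_mem j

/-- **The colorful Helly theorem** (Lovász). If `C 0, …, C d` are nonempty finite families of
convex sets in `ℝ^d` such that every transversal `K 0 ∈ C 0, …, K d ∈ C d` has non-empty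
intersection, then some family `C i` has non-empty total intersection. -/
theorem colorful_helly (d : ℕ) (C : Fin (d + 1) → Finset (Set (EuclideanSpace ℝ (Fin d))))
    (hne : ∀ i, (C i).Nonempty)
    (hconv : ∀ i, ∀ A ∈ C i, Convex ℝ A)
    (htrans : ∀ K : Fin (d + 1) → Set (EuclideanSpace ℝ (Fin d)),
      (∀ i, K i ∈ C i) → (⋂ i, K i).Nonempty) :
    ∃ i : Fin (d + 1), (⋂ A ∈ C i, A).Nonempty := by
  classical
  obtain ⟨W, hW, hW_meets⟩ := ((Set.Finite.pi fun i => (C i).finite_toSet).image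
    fun K => ⋂ i, K i).exists_finite_forall_inter_nonempty (by
      rintro _ ⟨K, hK, rfl⟩
      exact htrans K (by simpa using hK))
  let shrink : Set (EuclideanSpace ℝ (Fin d)) → Set (EuclideanSpace ℝ (Fin d)) :=
    fun A => convexHull ℝ (A ∩ W)
  have shrink_subset : ∀ i, ∀ A ∈ C i, shrink A ⊆ A := fun i A hA =>
    convexHull_min Set.inter_subset_left (hconv i A hA)
  have htrans_shrink : ∀ K : Fin (d + 1) → Set (EuclideanSpace ℝ (Fin d)),
      (∀ i, K i ∈ (C i).image shrink) → (⋂ i, K i).Nonempty := by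
    intro K hK
    simp only [Finset.mem_image] at hK
    choose A hA hAK using hK
    obtain ⟨x, hx, hxW⟩ := hW_meets _ ⟨A, fun i _ => hA i, rfl⟩
    exact ⟨x, Set.mem_iInter.2 fun i =>
      hAK i ▸ subset_convexHull ℝ _ ⟨Set.mem_iInter.1 hx i, hxW⟩⟩
  obtain ⟨i, x, hx⟩ := colorful_helly_of_isCompact (by simp) (fun i => (hne i).image shrink)
    (by simp only [Finset.forall_mem_image]; exact fun _ _ _ => convex_convexHull ℝ _)
    (by simp only [Finset.forall_mem_image]
        exact fun _ _ _ => (hW.subset Set.inter_subset_right).isCompact_convexHull ℝ)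
    htrans_shrink
  exact ⟨i, x, Set.mem_iInter₂.2 fun A hA =>
    shrink_subset i A hA (Set.mem_iInter₂.1 hx _ (Finset.mem_image_of_mem shrink hA))⟩
end

section
/- Let d ≥ 1 and 1 ≤ k ≤ d be integers, and set g = max{d+1, 2(d-k+1)}. Let F be a finite family of at least g convex sets in ℝ^d such that the intersection of every g members of F has dimension at least k. Then the intersection of all the members of F has dimension at least k. -/
/-!
By Helly's theorem all the sets share a point `x`, and replacing each set by its cone of feasible
directions at `x` does not change the dimensions of the intersections. For pointed cones, take a
minimal subfamily `T` whose intersection `D` has dimension `< k`. Moving the apex to a point `z`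
of the relative interior of `D`, i.e. replacing each cone `F` by `F - ℝ≥0 z`, and intersecting
all but one of the new cones gives cones `R a` of dimension `≥ k` containing `W = span D`, such
that sums of them over disjoint index sets meet only in `W`. For such cones one repeatedly picks a
minimal linear relation, modulo a growing subspace `Λ`, between relative interior points of the
`R a`; it can be taken positive, and it lets one absorb the spans of its cones into `Λ`, which
raises `dim Λ` by at least `k - dim W`. Counting the cones used gives `|T| ≤ max (d+1) (2(d-k+1))`.
-/

open Module Submodule Filter Topology

theorem Submodule.sum_smul_mkQ_comp_eq_zero_iff {R M ι : Type*} [Ring R] [AddCommGroup M]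
    [Module R M] (Λ : Submodule R M) (s : Finset ι) (ν : ι → R) (y : ι → M) :
    ∑ i ∈ s, ν i • (Λ.mkQ ∘ y) i = 0 ↔ ∑ i ∈ s, ν i • y i ∈ Λ := by
  rw [← Quotient.mk_eq_zero, ← mkQ_apply, map_sum]
  simp only [Function.comp_apply, map_smul]

theorem exists_forall_ne_zero_sum_smul_eq_zero_of_minimal {R M ι : Type*} [Ring R] [AddCommGroup M]
    [Module R M] {v : ι → M} {P : Finset ι}
    (hP : Minimal (fun s : Finset ι => ¬LinearIndepOn R v ↑s) P) :
    ∃ ν : ι → R, (∀ i ∈ P, ν i ≠ 0) ∧ ∑ i ∈ P, ν i • v i = 0 := by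
  classical
  obtain ⟨ν, hsum, i, hi, hνi⟩ := not_linearIndepOn_finset_iff.1 hP.1
  have hsupp : ∑ j ∈ P with ν j ≠ 0, ν j • v j = ∑ j ∈ P, ν j • v j :=
    Finset.sum_filter_of_ne fun j _ h hj => h (by simp [hj])
  have hdep : ¬LinearIndepOn R v ↑(P.filter (ν · ≠ 0)) :=
    not_linearIndepOn_finset_iff.2 ⟨ν, hsupp.trans hsum, i, Finset.mem_filter.2 ⟨hi, hνi⟩, hνi⟩
  have hP' : P.filter (ν · ≠ 0) = P :=
    (Finset.filter_subset _ _).antisymm (hP.2 hdep (Finset.filter_subset _ _))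
  refine ⟨ν, fun j hj => ?_, hsum⟩
  rw [← hP'] at hj
  exact (Finset.mem_filter.1 hj).2

theorem card_add_finrank_le_of_linearIndepOn_mkQ {K V ι : Type*} [Field K] [AddCommGroup V]
    [Module K V] [FiniteDimensional K V] {Λ Λ' : Submodule K V} {y : ι → V} {s : Finset ι}
    (hΛ : Λ ≤ Λ') (hy : ∀ i ∈ s, y i ∈ Λ') (hli : LinearIndepOn K (Λ.mkQ ∘ y) ↑s) :
    s.card + finrank K Λ ≤ finrank K Λ' := by
  set Λ₀ := Λ.comap Λ'.subtype
  have hΛ₀ : finrank K Λ₀ = finrank K Λ := (comapSubtypeEquivOfLe hΛ).finrank_eq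
  have hquot := Λ₀.finrank_quotient_add_finrank
  have hli' : LinearIndependent K fun i : s => Λ₀.mkQ ⟨y i, hy i i.2⟩ :=
    LinearIndependent.of_comp (Λ₀.mapQ Λ Λ'.subtype le_rfl) hli
  have := hli'.fintype_card_le_finrank
  simp only [Fintype.card_coe] at this
  omega

section FeasibleCone

variable {V : Type*} [AddCommGroup V] [Module ℝ V] {S : Set V} {x : V}

def Convex.feasibleCone (hS : Convex ℝ S) (hx : x ∈ S) : PointedCone ℝ V where
  carrier := {v | ∀ᶠ t in 𝓝[>] (0 : ℝ), x + t • v ∈ S}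
  zero_mem' := by simp [hx]
  add_mem' {u v} hu hv := by
    filter_upwards [eventually_nhdsGT_zero_mul_left two_pos hu,
      eventually_nhdsGT_zero_mul_left two_pos hv] with t hut hvt
    convert hS hut hvt (by norm_num : (0 : ℝ) ≤ 1 / 2) (by norm_num : (0 : ℝ) ≤ 1 / 2)
      (by norm_num) using 1
    module
  smul_mem' c v hv := by
    obtain ⟨c, hc⟩ := c
    rcases hc.eq_or_lt with rfl | hc
    · simp [hx]
    · filter_upwards [eventually_nhdsGT_zero_mul_left hc hv] with t ht
      simpa [smul_smul, mul_comm] using ht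

namespace Convex

variable (hS : Convex ℝ S) (hx : x ∈ S)

theorem mem_feasibleCone {v : V} :
    v ∈ hS.feasibleCone hx ↔ ∀ᶠ t in 𝓝[>] (0 : ℝ), x + t • v ∈ S := Iff.rfl

theorem sub_mem_feasibleCone {y : V} (hy : y ∈ S) : y - x ∈ hS.feasibleCone hx := by
  filter_upwards [Ioo_mem_nhdsGT one_pos] with t ht
  exact hS.add_smul_sub_mem hx hy ⟨ht.1.le, ht.2.le⟩

theorem direction_affineSpan_eq_span_feasibleCone :
    (affineSpan ℝ S).direction = span ℝ (hS.feasibleCone hx) := by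
  apply le_antisymm
  · rw [direction_affineSpan, vectorSpan_eq_span_vsub_set_right ℝ hx]
    exact span_mono (Set.image_subset_iff.2 fun y hy => hS.sub_mem_feasibleCone hx hy)
  · refine span_le.2 fun v hv => ?_
    obtain ⟨t, hmem, ht⟩ := ((hS.mem_feasibleCone hx).1 hv |>.and self_mem_nhdsWithin).exists
    have : t • v ∈ (affineSpan ℝ S).direction := by
      simpa using AffineSubspace.vsub_mem_direction (subset_affineSpan ℝ S hmem)
        (subset_affineSpan ℝ S hx)
    exact (Submodule.smul_mem_iff _ ht.ne').1 this

end Convex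

theorem Convex.direction_affineSpan_biInter_eq_span_iInf_feasibleCone {ι : Type*}
    {K : ι → Set V} (hK : ∀ i, Convex ℝ (K i)) (hx : ∀ i, x ∈ K i) (s : Finset ι) :
    (affineSpan ℝ (⋂ i ∈ s, K i)).direction =
      span ℝ ↑(⨅ i ∈ s, (hK i).feasibleCone (hx i)) := by
  rw [(convex_iInter₂ fun i _ => hK i).direction_affineSpan_eq_span_feasibleCone
    (Set.mem_iInter₂.2 fun i _ => hx i)]
  congr 1
  ext v
  simp [Convex.mem_feasibleCone]

end FeasibleCone

namespace PointedCone

variable {V : Type*} [AddCommGroup V] [Module ℝ V]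

noncomputable def dim (C : PointedCone ℝ V) : ℕ := finrank ℝ (span ℝ (C : Set V))

def intrinsicCore (C : PointedCone ℝ V) : Set V :=
  {z | ∀ v ∈ span ℝ (C : Set V), ∀ᶠ t in 𝓝 (0 : ℝ), z + t • v ∈ C}

variable {C K : PointedCone ℝ V} {z : V}

theorem mem_of_mem_intrinsicCore (hz : z ∈ C.intrinsicCore) : z ∈ C := by
  simpa using (hz 0 (zero_mem _)).self_of_nhds

theorem intrinsicCore_nonempty [FiniteDimensional ℝ V] (C : PointedCone ℝ V) :
    C.intrinsicCore.Nonempty := by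
  obtain ⟨b, hbC, hspan, hli⟩ := exists_linearIndependent ℝ (C : Set V)
  lift b to Finset V using hli.setFinite
  refine ⟨∑ e ∈ b, e, fun v hv => ?_⟩
  rw [← hspan, mem_span_finset] at hv
  obtain ⟨f, -, rfl⟩ := hv
  have hpos : ∀ e ∈ b, ∀ᶠ t in 𝓝 (0 : ℝ), 0 < 1 + t * f e := fun e _ =>
    (Continuous.tendsto' (by fun_prop) 0 1 (by simp)).eventually_const_lt one_pos
  filter_upwards [(eventually_all_finset b).2 hpos] with t ht
  have : ∑ e ∈ b, e + t • ∑ e ∈ b, f e • e = ∑ e ∈ b, (1 + t * f e) • e := by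
    simp [Finset.smul_sum, add_smul, smul_smul, Finset.sum_add_distrib]
  rw [this]
  exact C.sum_mem fun e he => C.smul_mem (ht e he).le (hbC he)

theorem span_le_lineal_of_neg_mem (hz : z ∈ C.intrinsicCore) (hCK : C ≤ K) (hK : -z ∈ K) :
    span ℝ (C : Set V) ≤ K.lineal := by
  have key : ∀ v ∈ span ℝ (C : Set V), v ∈ K := fun v hv => by
    obtain ⟨t, ht, hmem⟩ := (hz v hv).exists_gt
    have : t • v ∈ K := by simpa using K.add_mem (hCK hmem) hK
    exact (K.smul_mem_iff ht).1 this
  exact fun v hv => ⟨key v hv, key (-v) (neg_mem hv)⟩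

theorem eventually_add_smul_mem_of_mem_sup_hull_neg {C : PointedCone ℝ V} {z v : V}
    (hz : z ∈ C) (hv : v ∈ C ⊔ hull ℝ {-z}) : ∀ᶠ a : ℝ in atTop, v + a • z ∈ C := by
  obtain ⟨c, hc, w, hw, rfl⟩ := mem_sup.1 hv
  obtain ⟨⟨b, hb⟩, rfl⟩ := mem_span_singleton.1 hw
  filter_upwards [eventually_ge_atTop b] with a hab
  have : c + (⟨b, hb⟩ : {r : ℝ // 0 ≤ r}) • -z + a • z = c + (a - b) • z := by
    rw [Nonneg.mk_smul, smul_neg, sub_smul]; abel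
  rw [this]
  exact C.add_mem hc (C.smul_mem (sub_nonneg.2 hab) hz)

end PointedCone

section ConeSum

variable {V ι : Type*} [AddCommGroup V] [Module ℝ V]

def coneSum (W : Submodule ℝ V) (R : ι → PointedCone ℝ V) (A : Finset ι) : PointedCone ℝ V :=
  W ⊔ ⨆ a ∈ A, R a

def ConesIndepOver (W : Submodule ℝ V) (R : ι → PointedCone ℝ V) (T : Finset ι) : Prop :=
  ∀ A ⊆ T, ∀ B ⊆ T, Disjoint A B → coneSum W R A ⊓ coneSum W R B ≤ W

variable {W : Submodule ℝ V} {R : ι → PointedCone ℝ V} {A B T : Finset ι}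

theorem submodule_le_coneSum : (W : PointedCone ℝ V) ≤ coneSum W R A := le_sup_left

theorem le_coneSum {a : ι} (ha : a ∈ A) : R a ≤ coneSum W R A :=
  le_sup_of_le_right (le_biSup R ha)

theorem coneSum_mono (h : A ⊆ B) : coneSum W R A ≤ coneSum W R B :=
  sup_le_sup_left (biSup_mono fun _ ha => h ha) _

theorem sum_smul_mem_coneSum {x : ι → V} {ν : ι → ℝ} (hν : ∀ a ∈ A, 0 ≤ ν a)
    (hx : ∀ a ∈ A, x a ∈ R a) : ∑ a ∈ A, ν a • x a ∈ coneSum W R A :=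
  sum_mem fun a ha => PointedCone.smul_mem _ (hν a ha) (le_coneSum ha (hx a ha))

theorem conesIndepOver_iInf_erase [DecidableEq ι] {E : ι → PointedCone ℝ V}
    (hWE : ∀ b ∈ T, (W : PointedCone ℝ V) ≤ E b) (hEW : ⨅ b ∈ T, E b ≤ W) :
    ConesIndepOver W (fun a => ⨅ b ∈ T.erase a, E b) T := by
  intro A _ B _ hAB
  have hle : ∀ c ∈ T, ∀ A' : Finset ι, c ∉ A' →
      coneSum W (fun a => ⨅ b ∈ T.erase a, E b) A' ≤ E c := fun c hc A' hcA' =>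
    sup_le (hWE c hc) <| iSup₂_le fun a ha =>
      iInf₂_le c (Finset.mem_erase.2 ⟨fun h => hcA' (h ▸ ha), hc⟩)
  refine le_trans (le_iInf₂ fun c hc => ?_) hEW
  by_cases hcA : c ∈ A
  · exact inf_le_right.trans (hle c hc B (Finset.disjoint_left.1 hAB hcA))
  · exact inf_le_left.trans (hle c hc A hcA)

end ConeSum

def katchalskiNumber (d k : ℕ) : ℕ := max (d + 1) (2 * (d - k + 1))

theorem le_katchalskiNumber {c d j k s : ℕ} (hjk : j < k) (h₁ : c + j ≤ d + s)
    (h₂ : j + s * k ≤ d + s * j) : c ≤ katchalskiNumber d k := by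
  unfold katchalskiNumber
  rcases lt_or_ge s 2 with hs | hs
  · interval_cases s <;> omega
  · have : s + 2 * k ≤ d + j + 2 := by nlinarith
    omega

namespace ConesIndepOver

open PointedCone

variable {V ι : Type*} [AddCommGroup V] [Module ℝ V] [DecidableEq ι]
  {W Λ : Submodule ℝ V} {R : ι → PointedCone ℝ V} {T C P : Finset ι} {x : ι → V}

theorem mem_of_sum_smul_mem_coneSum_union (hind : ConesIndepOver W R T)
    (hxR : ∀ a, x a ∈ R a) (hC : C ⊆ T) {A B : Finset ι} (hA : A ⊆ C) (hB : B ⊆ C)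
    (hAB : Disjoint A B) {ν : ι → ℝ} (hν : ∀ a ∈ A, 0 ≤ ν a)
    (h : ∑ a ∈ A, ν a • x a ∈ coneSum W R (T \ C ∪ B)) : ∑ a ∈ A, ν a • x a ∈ W :=
  hind A (hA.trans hC) _ (Finset.union_subset Finset.sdiff_subset (hB.trans hC))
    (Finset.disjoint_union_right.2 ⟨Finset.disjoint_of_subset_left hA Finset.disjoint_sdiff, hAB⟩)
    ⟨sum_smul_mem_coneSum hν fun a _ => hxR a, h⟩

theorem exists_pos_sum_smul_mem (hind : ConesIndepOver W R T) (hxR : ∀ a, x a ∈ R a)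
    (hC : C ⊆ T) (hWΛ : W ≤ Λ) (hΛ : (Λ : PointedCone ℝ V) ≤ coneSum W R (T \ C))
    (hPC : P ⊆ C) (hP : Minimal (fun s : Finset ι => ¬LinearIndepOn ℝ (Λ.mkQ ∘ x) ↑s) P) :
    ∃ ν : ι → ℝ, (∀ p ∈ P, 0 < ν p) ∧ ∑ p ∈ P, ν p • x p ∈ W := by
  obtain ⟨ν, hν, hsum⟩ := exists_forall_ne_zero_sum_smul_eq_zero_of_minimal hP
  rw [sum_smul_mkQ_comp_eq_zero_iff] at hsum
  have hΛsub : ∀ B, (Λ : PointedCone ℝ V) ≤ coneSum W R (T \ C ∪ B) :=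
    fun B => hΛ.trans (coneSum_mono Finset.subset_union_left)
  set A := P.filter (0 < ν ·)
  set B := P.filter (¬0 < ν ·)
  have hBneg : ∀ b ∈ B, 0 ≤ -ν b := fun b hb => by
    have := (Finset.mem_filter.1 hb).2; linarith
  -- the positive part of the relation lies in `Λ` plus the cone of the negative part
  have hA : ∑ a ∈ A, ν a • x a ∈ W := by
    refine mem_of_sum_smul_mem_coneSum_union hind hxR hC ((Finset.filter_subset _ _).trans hPC)
      ((Finset.filter_subset _ _).trans hPC) (Finset.disjoint_filter_filter_not _ _ _)
      (fun a ha => (Finset.mem_filter.1 ha).2.le) ?_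
    have hsplit : ∑ a ∈ A, ν a • x a = ∑ p ∈ P, ν p • x p + ∑ b ∈ B, -ν b • x b := by
      rw [← Finset.sum_filter_add_sum_filter_not P (0 < ν ·)]
      simp [A, B, neg_smul]
    rw [hsplit]
    exact add_mem (hΛsub B hsum) (coneSum_mono Finset.subset_union_right
      (sum_smul_mem_coneSum hBneg fun b _ => hxR b))
  rcases A.eq_empty_or_nonempty with hA0 | ⟨a, ha⟩
  · have hneg : ∀ p ∈ P, 0 < -ν p := fun p hp => by
      have := Finset.filter_eq_empty_iff.1 hA0 hp
      have := hν p hp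
      grind
    refine ⟨fun p => -ν p, hneg, mem_of_sum_smul_mem_coneSum_union hind hxR hC hPC
      (Finset.empty_subset C) (Finset.disjoint_empty_right P) (fun p hp => (hneg p hp).le) ?_⟩
    simpa [neg_smul] using hΛsub ∅ (Λ.neg_mem hsum)
  · have hAP : A = P := by
      by_contra hne
      have hli := hP.not_prop_of_lt (lt_of_le_of_ne (Finset.filter_subset _ _) hne)
      rw [not_not, linearIndepOn_finset_iff] at hli
      exact (Finset.mem_filter.1 ha).2.ne'
        (hli ν ((sum_smul_mkQ_comp_eq_zero_iff Λ A ν x).2 (hWΛ hA)) a ha)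
    refine ⟨ν, fun p hp => ?_, hAP ▸ hA⟩
    rw [← hAP] at hp
    exact (Finset.mem_filter.1 hp).2

theorem neg_mem_coneSum_erase (hxR : ∀ a, x a ∈ R a) {ν : ι → ℝ} (hν : ∀ p ∈ P, 0 < ν p)
    (hu : ∑ p ∈ P, ν p • x p ∈ W) {p : ι} (hp : p ∈ P) : -x p ∈ coneSum W R (P.erase p) := by
  have heq : -x p = (ν p)⁻¹ • (-∑ q ∈ P, ν q • x q + ∑ q ∈ P.erase p, ν q • x q) := by
    rw [← Finset.add_sum_erase P _ hp, neg_add, neg_add_cancel_right, smul_neg,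
      inv_smul_smul₀ (hν p hp).ne']
  rw [heq]
  exact PointedCone.smul_mem _ (inv_nonneg.2 (hν p hp).le) <| add_mem
    (submodule_le_coneSum (W.neg_mem hu))
    (sum_smul_mem_coneSum (fun q hq => (hν q (Finset.mem_of_mem_erase hq)).le) fun q _ => hxR q)

theorem sup_iSup_span_le_coneSum (hx : ∀ a, x a ∈ (R a).intrinsicCore)
    (hΛ : (Λ : PointedCone ℝ V) ≤ coneSum W R (T \ C)) (hPT : P ⊆ T)
    (hneg : ∀ p ∈ P, -x p ∈ coneSum W R (P.erase p)) :
    ((Λ ⊔ ⨆ p ∈ P, span ℝ (R p : Set V) : Submodule ℝ V) : PointedCone ℝ V) ≤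
      coneSum W R (T \ (C \ P)) := by
  have hP : P ⊆ T \ (C \ P) := fun p hp =>
    Finset.mem_sdiff.2 ⟨hPT hp, fun h => (Finset.mem_sdiff.1 h).2 hp⟩
  rw [gc_ofSubmodule_lineal.le_iff_le]
  refine sup_le ?_ (iSup₂_le fun p hp => ?_)
  · exact gc_ofSubmodule_lineal.le_iff_le.1 (hΛ.trans (coneSum_mono (Finset.sdiff_subset_sdiff
      subset_rfl Finset.sdiff_subset)))
  · exact span_le_lineal_of_neg_mem (hx p) (le_coneSum (hP hp))
      (coneSum_mono ((Finset.erase_subset p P).trans hP) (hneg p hp))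

theorem inf_iSup_span_le (hind : ConesIndepOver W R T) (hx : ∀ a, x a ∈ (R a).intrinsicCore)
    (hC : C ⊆ T) (hWΛ : W ≤ Λ) (hΛ : (Λ : PointedCone ℝ V) ≤ coneSum W R (T \ C))
    (hPC : P ⊆ C) {ν : ι → ℝ} (hν : ∀ p ∈ P, 0 < ν p) (hu : ∑ p ∈ P, ν p • x p ∈ W) :
    Λ ⊓ ⨆ p ∈ P, span ℝ (R p : Set V) ≤ W := by
  rintro w ⟨hwΛ, hwP⟩
  obtain ⟨g, rfl⟩ := (mem_iSup_finset_iff_exists_sum _ w).1 hwP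
  -- for small `t > 0`, `∑ p ∈ P, ν p • x p + t • w` is a positive combination of points of the
  -- `R p` that also lies in `Λ`
  obtain ⟨t, ht, hmem⟩ := ((eventually_all_finset P).2 fun p _ =>
    hx p _ (smul_mem _ (ν p)⁻¹ (g p).2)).exists_gt
  have hsum : ∑ p ∈ P, ν p • (x p + t • (ν p)⁻¹ • (g p : V)) =
      ∑ p ∈ P, ν p • x p + t • ∑ p ∈ P, (g p : V) := by
    rw [Finset.smul_sum, ← Finset.sum_add_distrib]
    refine Finset.sum_congr rfl fun p hp => ?_
    rw [smul_add, smul_comm t, smul_inv_smul₀ (hν p hp).ne']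
  have hW : ∑ p ∈ P, ν p • x p + t • ∑ p ∈ P, (g p : V) ∈ W := by
    rw [← hsum]
    refine hind P (hPC.trans hC) (T \ C) Finset.sdiff_subset
      (Finset.disjoint_of_subset_left hPC Finset.disjoint_sdiff)
      ⟨sum_smul_mem_coneSum (fun p hp => (hν p hp).le) hmem, hΛ ?_⟩
    rw [hsum]
    exact Λ.add_mem (hWΛ hu) (Λ.smul_mem t hwΛ)
  exact (W.smul_mem_iff ht.ne').1 ((W.add_mem_iff_right hu).1 hW)

variable [FiniteDimensional ℝ V] {k : ℕ}

/- `s` counts the minimal relations used: each one takes at most `1 + (gain in dim Λ)` indices out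
of `C` and raises `dim Λ` by at least `k - dim W`. -/
theorem exists_card_add_finrank_le (hind : ConesIndepOver W R T)
    (hx : ∀ a, x a ∈ (R a).intrinsicCore) (hrank : ∀ a ∈ T, k ≤ (R a).dim)
    (C : Finset ι) (hC : C ⊆ T) (Λ : Submodule ℝ V) (hWΛ : W ≤ Λ)
    (hΛ : (Λ : PointedCone ℝ V) ≤ coneSum W R (T \ C)) :
    ∃ s : ℕ, C.card + finrank ℝ Λ ≤ finrank ℝ V + s ∧
      finrank ℝ Λ + s * k ≤ finrank ℝ V + s * finrank ℝ W := by
  induction C using Finset.strongInduction generalizing Λ with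
  | H C ih =>
  by_cases hli : LinearIndepOn ℝ (Λ.mkQ ∘ x) ↑C
  · refine ⟨0, ?_, by simpa using Λ.finrank_le⟩
    simpa using card_add_finrank_le_of_linearIndepOn_mkQ le_top (fun _ _ => mem_top) hli
  obtain ⟨P, hPC, hP⟩ := exists_minimal_le_of_wellFoundedLT
    (fun s : Finset ι => ¬LinearIndepOn ℝ (Λ.mkQ ∘ x) ↑s) C hli
  have hxR : ∀ a, x a ∈ R a := fun a => mem_of_mem_intrinsicCore (hx a)
  obtain ⟨ν, hν, hu⟩ := hind.exists_pos_sum_smul_mem hxR hC hWΛ hΛ hPC hP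
  obtain ⟨p, hp⟩ : P.Nonempty := Finset.nonempty_iff_ne_empty.2 fun h => hP.1 (by simp [h])
  set U := ⨆ q ∈ P, span ℝ (R q : Set V)
  obtain ⟨s, h₁, h₂⟩ := ih (C \ P) (Finset.sdiff_ssubset hPC ⟨p, hp⟩)
    (Finset.sdiff_subset.trans hC) (Λ ⊔ U) (hWΛ.trans le_sup_left)
    (sup_iSup_span_le_coneSum hx hΛ (hPC.trans hC) fun q hq => neg_mem_coneSum_erase hxR hν hu hq)
  have hdim : finrank ℝ Λ + k ≤ finrank ℝ ↥(Λ ⊔ U) + finrank ℝ W := by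
    have := finrank_sup_add_finrank_inf_eq Λ U
    have : finrank ℝ ↥(Λ ⊓ U) ≤ finrank ℝ W :=
      finrank_mono (inf_iSup_span_le hind hx hC hWΛ hΛ hPC hν hu)
    have : k ≤ finrank ℝ U := (hrank p (hPC.trans hC hp)).trans
      (finrank_mono (le_iSup₂ (f := fun q (_ : q ∈ P) => span ℝ (R q : Set V)) p hp))
    omega
  have hcard : (P.erase p).card + finrank ℝ Λ ≤ finrank ℝ ↥(Λ ⊔ U) :=
    card_add_finrank_le_of_linearIndepOn_mkQ le_sup_left
      (fun q hq => mem_sup_right (le_iSup₂ (f := fun q (_ : q ∈ P) => span ℝ (R q : Set V)) q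
        (Finset.mem_of_mem_erase hq) (subset_span (hxR q))))
      (not_not.1 (hP.not_prop_of_lt (Finset.erase_ssubset hp)))
  have := Finset.card_sdiff_add_card_eq_card hPC
  have := Finset.card_erase_add_one hp
  refine ⟨s + 1, by omega, ?_⟩
  rw [add_one_mul, add_one_mul]
  omega

theorem card_le_katchalskiNumber (hind : ConesIndepOver W R T)
    (hrank : ∀ a ∈ T, k ≤ (R a).dim) (hW : finrank ℝ W < k) :
    T.card ≤ katchalskiNumber (finrank ℝ V) k := by
  choose x hx using fun a => (R a).intrinsicCore_nonempty
  obtain ⟨s, h₁, h₂⟩ := hind.exists_card_add_finrank_le hx hrank T subset_rfl W le_rfl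
    (by simpa using submodule_le_coneSum)
  exact le_katchalskiNumber hW h₁ h₂

end ConesIndepOver

namespace PointedCone

variable {V ι : Type*} [AddCommGroup V] [Module ℝ V] [FiniteDimensional ℝ V] [DecidableEq ι]

theorem card_le_katchalskiNumber_of_critical {F : ι → PointedCone ℝ V} {T : Finset ι} {k : ℕ}
    (hT : (⨅ i ∈ T, F i).dim < k) (hcrit : ∀ a ∈ T, k ≤ (⨅ i ∈ T.erase a, F i).dim) :
    T.card ≤ katchalskiNumber (finrank ℝ V) k := by
  set D := ⨅ i ∈ T, F i
  obtain ⟨z, hz⟩ := D.intrinsicCore_nonempty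
  have hzD := mem_of_mem_intrinsicCore hz
  have hzF : ∀ b ∈ T, z ∈ F b := by simpa [D] using hzD
  -- `E b` is the cone of feasible directions of `F b` at `z`
  set E : ι → PointedCone ℝ V := fun b => F b ⊔ hull ℝ {-z}
  have hindep : ConesIndepOver (span ℝ (D : Set V)) (fun a => ⨅ b ∈ T.erase a, E b) T := by
    refine conesIndepOver_iInf_erase (fun b hb => ?_) fun v hv => ?_
    · exact gc_ofSubmodule_lineal.le_iff_le.2 <| span_le_lineal_of_neg_mem hz
        ((iInf₂_le b hb).trans le_sup_left) (mem_sup_right (subset_hull rfl))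
    · obtain ⟨a, ha⟩ := ((eventually_all_finset T).2 fun b hb =>
        eventually_add_smul_mem_of_mem_sup_hull_neg (hzF b hb)
          (by simp only [Submodule.mem_iInf] at hv; exact hv b hb)).exists
      have : v + a • z ∈ D := by simpa [D] using ha
      simpa using sub_mem (Submodule.subset_span this)
        (Submodule.smul_mem _ a (Submodule.subset_span hzD))
  refine hindep.card_le_katchalskiNumber (fun a ha => (hcrit a ha).trans ?_) hT
  exact finrank_mono (span_mono (SetLike.coe_subset_coe.2 (iInf₂_mono fun b _ => le_sup_left)))

theorem le_dim_iInf_of_forall_card_le {F : ι → PointedCone ℝ V} {k : ℕ} (s : Finset ι)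
    (h : ∀ t ⊆ s, t.card ≤ katchalskiNumber (finrank ℝ V) k →
      k ≤ (⨅ i ∈ t, F i).dim) :
    k ≤ (⨅ i ∈ s, F i).dim := by
  induction s using Finset.strongInduction with
  | H s ih =>
  by_cases hs : s.card ≤ katchalskiNumber (finrank ℝ V) k
  · exact h s subset_rfl hs
  by_contra hlt
  exact hs <| card_le_katchalskiNumber_of_critical (not_le.1 hlt) fun a ha =>
    ih _ (Finset.erase_ssubset ha) fun t ht => h t (ht.trans (Finset.erase_subset a s))

end PointedCone

theorem katchalski_dimension_helly_general (d k : ℕ) (hk1 : 1 ≤ k)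
    (n : ℕ) (hn : max (d + 1) (2 * (d - k + 1)) ≤ n)
    (K : Fin n → Set (EuclideanSpace ℝ (Fin d)))
    (hconv : ∀ i, Convex ℝ (K i))
    (hdim : ∀ S : Finset (Fin n), S.card = max (d + 1) (2 * (d - k + 1)) →
      k ≤ Module.finrank ℝ (affineSpan ℝ (⋂ i ∈ S, K i)).direction) :
    k ≤ Module.finrank ℝ (affineSpan ℝ (⋂ i, K i)).direction := by
  have hsmall : ∀ I : Finset (Fin n), I.card ≤ katchalskiNumber d k →
      k ≤ finrank ℝ (affineSpan ℝ (⋂ i ∈ I, K i)).direction := by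
    intro I hI
    obtain ⟨S, hIS, -, hS⟩ := Finset.exists_subsuperset_card_eq (Finset.subset_univ I) hI
      (by simpa [katchalskiNumber] using hn)
    exact (hdim S hS).trans (finrank_mono (AffineSubspace.direction_le (affineSpan_mono ℝ
      (Set.biInter_subset_biInter_left (Finset.coe_subset.2 hIS)))))
  obtain ⟨x, hx⟩ : (⋂ i ∈ Finset.univ, K i).Nonempty := by
    refine Convex.helly_theorem' (fun i _ => hconv i) fun I _ hI => ?_
    by_contra hempty
    have := hsmall I (by rw [finrank_euclideanSpace_fin] at hI; exact hI.trans (le_max_left _ _))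
    rw [Set.not_nonempty_iff_eq_empty.1 hempty, AffineSubspace.span_empty,
      AffineSubspace.direction_bot, finrank_bot] at this
    omega
  have hxK : ∀ i, x ∈ K i := by simpa using hx
  have hspan := Convex.direction_affineSpan_biInter_eq_span_iInf_feasibleCone hconv hxK
  have := PointedCone.le_dim_iInf_of_forall_card_le Finset.univ fun t _ ht => by
    rw [finrank_euclideanSpace_fin] at ht
    rw [PointedCone.dim, ← hspan t]
    exact hsmall t ht
  rwa [show ⋂ i, K i = ⋂ i ∈ Finset.univ, K i by simp, hspan]

/-- **Katchalski's dimension Helly theorem.** Let `1 ≤ k ≤ d` and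
`g = max {d+1, 2(d-k+1)}`. If in a family of at least `g` convex sets in `ℝ^d` every `g`
members have an intersection of dimension at least `k`, then the intersection of the whole
family has dimension at least `k`. (For a nonempty convex set, its dimension is the
dimension of its affine hull; since `k ≥ 1`, "dimension ≥ k" is expressed as
`k ≤ finrank` of the direction of the affine span.) -/
theorem katchalski_dimension_helly (d k : ℕ) (hd : 1 ≤ d) (hk1 : 1 ≤ k) (hkd : k ≤ d)
    (n : ℕ) (hn : max (d + 1) (2 * (d - k + 1)) ≤ n)
    (K : Fin n → Set (EuclideanSpace ℝ (Fin d)))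
    (hconv : ∀ i, Convex ℝ (K i))
    (hdim : ∀ S : Finset (Fin n), S.card = max (d + 1) (2 * (d - k + 1)) →
      k ≤ Module.finrank ℝ (affineSpan ℝ (⋂ i ∈ S, K i)).direction) :
    k ≤ Module.finrank ℝ (affineSpan ℝ (⋂ i, K i)).direction :=
  katchalski_dimension_helly_general d k hk1 n hn K hconv hdim
end

section
/- Let F be a finite family of convex lattice sets in ℤ^d, that is, sets of the form ℤ^d ∩ C where C is a convex subset of ℝ^d, with |F| ≥ 2^d. If every 2^d members of F have a point in common, then the intersection of all members of F is non-empty. -/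
/-!
Suppose the family has no common point. All witnesses of the `2^d`-subfamilies lie in a lattice
box `B`, and inside `B` each `K i` is cut out by finitely many integer inequalities: a lattice
point of `B \ K i` is separated from the finite set `B ∩ K i` by a real hyperplane, and
perturbing its normal inside the open cone of separating normals makes it integral.
The union of these systems has no integer solution, so it has an infeasible subsystem in which
every row is needed. Such a system has at most `2^d` rows (Bell, Scarf): relax its right-hand
sides as far as infeasibility allows; then each row `k` has a lattice point `x k` violating only
row `k`, and by one unit. Two of more than `2^d` lattice points agree mod 2, and the midpoint of
such a pair `x i`, `x j` is an integer solution. The rows of the subsystem come from at most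
`2^d` members of the family, and a common point of those satisfies all of them.
-/

namespace Doignon

variable {σ : Type*} [Fintype σ]

theorem exists_intCast_mem_of_isOpen_of_smul_mem {U : Set (σ → ℝ)} (hU : IsOpen U)
    (hcone : ∀ c : ℝ, 0 < c → ∀ v ∈ U, c • v ∈ U) (hne : U.Nonempty) :
    ∃ a : σ → ℤ, (fun t => (a t : ℝ)) ∈ U := by
  obtain ⟨v, hv⟩ := hne
  obtain ⟨ε, hε, hball⟩ := Metric.isOpen_iff.1 hU v hv
  obtain ⟨N, hN⟩ := exists_nat_gt ε⁻¹
  have hN0 : (0 : ℝ) < N := (inv_pos.2 hε).trans hN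
  refine ⟨fun t => round (N * v t), ?_⟩
  have hclose : (N : ℝ)⁻¹ • (fun t => (round (N * v t) : ℝ)) ∈ Metric.ball v ε := by
    rw [Metric.mem_ball, dist_pi_lt_iff hε]
    intro t
    have hround : |round (N * v t) - N * v t| ≤ 1 / 2 := by
      rw [abs_sub_comm]; exact abs_sub_round _
    have hNε : (N : ℝ)⁻¹ < ε := inv_lt_of_inv_lt₀ hε hN
    calc dist ((N : ℝ)⁻¹ * round (N * v t)) (v t)
        = |(N : ℝ)⁻¹ * (round (N * v t) - N * v t)| := by
          rw [Real.dist_eq, mul_sub, inv_mul_cancel_left₀ hN0.ne']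
      _ = (N : ℝ)⁻¹ * |round (N * v t) - N * v t| := by
          rw [abs_mul, abs_of_pos (inv_pos.2 hN0)]
      _ ≤ (N : ℝ)⁻¹ * (1 / 2) := by gcongr
      _ < ε := by linarith
  simpa [smul_smul, hN0.ne'] using hcone N hN0 _ (hball hclose)

def toEuclidean (x : σ → ℤ) : EuclideanSpace ℝ σ := WithLp.toLp 2 (fun t => (x t : ℝ))

theorem exists_dotProduct_eq_apply_toEuclidean (f : StrongDual ℝ (EuclideanSpace ℝ σ)) :
    ∃ v : σ → ℝ, ∀ x : σ → ℤ, f (toEuclidean x) = v ⬝ᵥ (fun t => (x t : ℝ)) := by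
  refine ⟨WithLp.ofLp ((InnerProductSpace.toDual ℝ _).symm f), fun x => ?_⟩
  rw [← InnerProductSpace.toDual_symm_apply, EuclideanSpace.inner_eq_star_dotProduct,
    star_trivial, dotProduct_comm]
  rfl

theorem exists_dotProduct_lt_of_convex {C : Set (EuclideanSpace ℝ σ)} (hC : Convex ℝ C)
    {F : Finset (σ → ℤ)} (hF : ∀ y ∈ F, toEuclidean y ∈ C) {z : σ → ℤ}
    (hz : toEuclidean z ∉ C) : ∃ a : σ → ℤ, ∀ y ∈ F, a ⬝ᵥ y < a ⬝ᵥ z := by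
  have hz' : toEuclidean z ∉ convexHull ℝ (toEuclidean '' F) :=
    fun h => hz (convexHull_min (Set.image_subset_iff.2 hF) hC h)
  obtain ⟨f, u, hfF, hfz⟩ := geometric_hahn_banach_closed_point (convex_convexHull ℝ _)
    ((F.finite_toSet.image _).isClosed_convexHull ℝ) hz'
  let U : Set (σ → ℝ) :=
    {v | ∀ y ∈ F, v ⬝ᵥ (fun t => (y t : ℝ)) < v ⬝ᵥ (fun t => (z t : ℝ))}
  have hU : IsOpen U := by
    simp only [U, Set.ofPred_forall]
    exact isOpen_biInter_finset fun y _ => isOpen_lt (by fun_prop) (by fun_prop)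
  have hcone : ∀ c : ℝ, 0 < c → ∀ v ∈ U, c • v ∈ U := fun c hc v hv y hy => by
    simpa only [smul_dotProduct, smul_eq_mul, mul_lt_mul_iff_right₀ hc] using hv y hy
  obtain ⟨v, hv⟩ := exists_dotProduct_eq_apply_toEuclidean f
  have hne : U.Nonempty := ⟨v, fun y hy => by
    rw [← hv, ← hv]
    exact (hfF _ (subset_convexHull ℝ _ ⟨y, hy, rfl⟩)).trans hfz⟩
  obtain ⟨a, ha⟩ := exists_intCast_mem_of_isOpen_of_smul_mem hU hcone hne
  refine ⟨a, fun y hy => ?_⟩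
  have := ha y hy
  simp only [dotProduct] at this ⊢
  exact_mod_cast this

section BellScarf

variable {ι : Type*} [Fintype ι] {a : ι → σ → ℤ} {b : ι → ℤ}

theorem exists_ne_add_eq_two_smul (x : ι → σ → ℤ)
    (h : 2 ^ Fintype.card σ < Fintype.card ι) : ∃ i j, i ≠ j ∧ ∃ z, x i + x j = (2 : ℤ) • z := by
  classical
  obtain ⟨i, j, hij, hparity⟩ := Fintype.exists_ne_map_eq_of_card_lt
    (fun k t => (x k t : ZMod 2)) (by simpa using h)
  have hdvd : ∀ t, ∃ c, x j t - x i t = 2 * c := fun t =>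
    (ZMod.intCast_eq_intCast_iff_dvd_sub _ _ 2).1 (congrFun hparity t)
  choose c hc using hdvd
  refine ⟨i, j, hij, x i + c, funext fun t => ?_⟩
  simp only [Pi.add_apply, Pi.smul_apply, smul_eq_mul]
  linarith [hc t]

theorem card_le_two_pow_of_tight (hinf : ∀ x, ∃ k, b k < a k ⬝ᵥ x)
    (htight : ∀ k, ∃ x, (∀ l ≠ k, a l ⬝ᵥ x ≤ b l) ∧ a k ⬝ᵥ x ≤ b k + 1) :
    Fintype.card ι ≤ 2 ^ Fintype.card σ := by
  by_contra! hcard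
  choose x hx hxk using htight
  obtain ⟨i, j, hij, z, hz⟩ := exists_ne_add_eq_two_smul x hcard
  obtain ⟨k, hk⟩ := hinf z
  have hsum : a k ⬝ᵥ x i + a k ⬝ᵥ x j = 2 * a k ⬝ᵥ z := by
    rw [← dotProduct_add, hz, dotProduct_smul, smul_eq_mul]
  have hslack : ∀ l, a k ⬝ᵥ x l ≤ b k + 1 := fun l => by
    rcases eq_or_ne k l with rfl | hkl
    · exact hxk k
    · linarith [hx l k hkl]
  rcases eq_or_ne k i with rfl | hki
  · linarith [hx j k hij, hslack k]
  · linarith [hx i k hki, hslack j]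

theorem exists_tight_of_critical (hinf : ∀ x, ∃ k, b k < a k ⬝ᵥ x)
    (hcrit : ∀ k, ∃ x, ∀ l ≠ k, a l ⬝ᵥ x ≤ b l) :
    ∃ b' : ι → ℤ, (∀ x, ∃ k, b' k < a k ⬝ᵥ x) ∧
      ∀ k, ∃ x, (∀ l ≠ k, a l ⬝ᵥ x ≤ b' l) ∧ a k ⬝ᵥ x ≤ b' k + 1 := by
  classical
  choose x hx using hcrit
  set S : Set (ι → ℤ) := {b' | b ≤ b' ∧ ∀ y, ∃ k, b' k < a k ⬝ᵥ y}
  have hS : S ⊆ Set.Icc b (fun k => a k ⬝ᵥ x k) := by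
    rintro b' ⟨hbb', hinf'⟩
    refine ⟨hbb', fun k => ?_⟩
    obtain ⟨l, hl⟩ := hinf' (x k)
    rcases eq_or_ne l k with rfl | hlk
    · exact hl.le
    · linarith [hx k l hlk, hbb' l]
  obtain ⟨b', hb'⟩ := ((Set.finite_Icc _ _).subset hS).exists_maximal ⟨b, le_rfl, hinf⟩
  refine ⟨b', hb'.prop.2, fun k => ?_⟩
  have hle : b' ≤ b' + Pi.single k 1 := le_add_of_nonneg_right (Pi.single_nonneg.2 zero_le_one)
  have hnot : b' + Pi.single k 1 ∉ S := fun hmem => by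
    simpa using hb'.le_of_ge hmem hle k
  simp only [S, Set.mem_ofPred_eq, not_and, not_forall, not_exists, not_lt] at hnot
  obtain ⟨y, hy⟩ := hnot (hb'.prop.1.trans hle)
  refine ⟨y, fun l hlk => ?_, ?_⟩
  · simpa [Pi.single_apply, hlk] using hy l
  · simpa using hy k

theorem card_le_two_pow_of_critical (hinf : ∀ x, ∃ k, b k < a k ⬝ᵥ x)
    (hcrit : ∀ k, ∃ x, ∀ l ≠ k, a l ⬝ᵥ x ≤ b l) : Fintype.card ι ≤ 2 ^ Fintype.card σ := by
  obtain ⟨b', hinf', htight⟩ := exists_tight_of_critical hinf hcrit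
  exact card_le_two_pow_of_tight hinf' htight

end BellScarf

def intHalfspace (r : (σ → ℤ) × ℤ) : Set (σ → ℤ) := {x | r.1 ⬝ᵥ x ≤ r.2}

theorem card_le_two_pow_of_biInter_erase_nonempty {R : Finset ((σ → ℤ) × ℤ)}
    (h : ⋂ r ∈ R, intHalfspace r = ∅)
    (hcrit : ∀ r ∈ R, (⋂ s ∈ R.erase r, intHalfspace s).Nonempty) :
    R.card ≤ 2 ^ Fintype.card σ := by
  rw [← Fintype.card_coe]
  refine card_le_two_pow_of_critical (a := fun r : R => r.1.1) (b := fun r => r.1.2)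
    (fun x => ?_) (fun r => ?_)
  · have hx : x ∉ ⋂ r ∈ R, intHalfspace r := h ▸ Set.notMem_empty x
    simp only [Set.mem_iInter, not_forall] at hx
    obtain ⟨r, hr, hxr⟩ := hx
    exact ⟨⟨r, hr⟩, not_le.1 hxr⟩
  · obtain ⟨x, hx⟩ := hcrit r.1 r.2
    refine ⟨x, fun s hs => ?_⟩
    exact Set.mem_iInter₂.1 hx s.1 (Finset.mem_erase.2 ⟨Subtype.coe_ne_coe.2 hs, s.2⟩)

theorem exists_subset_card_le_biInter_eq_empty {R : Finset ((σ → ℤ) × ℤ)}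
    (h : ⋂ r ∈ R, intHalfspace r = ∅) :
    ∃ R' ⊆ R, R'.card ≤ 2 ^ Fintype.card σ ∧ ⋂ r ∈ R', intHalfspace r = ∅ := by
  classical
  induction R using Finset.strongInduction with
  | H R ih =>
    by_cases hcrit : ∀ r ∈ R, (⋂ s ∈ R.erase r, intHalfspace s).Nonempty
    · exact ⟨R, subset_rfl, card_le_two_pow_of_biInter_erase_nonempty h hcrit, h⟩
    · simp only [not_forall, Set.not_nonempty_iff_eq_empty] at hcrit
      obtain ⟨r, hr, he⟩ := hcrit
      obtain ⟨R', hR', hcard, hR'e⟩ := ih _ (Finset.erase_ssubset hr) he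
      exact ⟨R', hR'.trans (Finset.erase_subset r R), hcard, hR'e⟩

theorem exists_card_le_biInter_eq_empty {κ : Type*} [Fintype κ] (P : κ → Finset ((σ → ℤ) × ℤ))
    (h : ⋂ i, ⋂ r ∈ P i, intHalfspace r = ∅) :
    ∃ t : Finset κ, t.card ≤ 2 ^ Fintype.card σ ∧ ⋂ i ∈ t, ⋂ r ∈ P i, intHalfspace r = ∅ := by
  classical
  obtain ⟨R, hR, hcard, hRe⟩ := exists_subset_card_le_biInter_eq_empty (R := Finset.univ.biUnion P)
    (by simpa only [Finset.set_biInter_biUnion, Finset.mem_univ, Set.iInter_true] using h)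
  have htag : ∀ r : R, ∃ i, r.1 ∈ P i := fun r => by simpa using hR r.2
  choose tag htag using htag
  refine ⟨Finset.univ.image tag, (Finset.card_image_le).trans (by simpa using hcard), ?_⟩
  refine Set.subset_eq_empty (fun x hx => ?_) hRe
  simp only [Set.mem_iInter] at hx ⊢
  intro r hr
  exact hx _ (Finset.mem_image_of_mem _ (Finset.mem_univ ⟨r, hr⟩)) r (htag ⟨r, hr⟩)

theorem exists_biInter_intHalfspace_eq_Icc (lo hi : σ → ℤ) :
    ∃ R : Finset ((σ → ℤ) × ℤ), ⋂ r ∈ R, intHalfspace r = Set.Icc lo hi := by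
  classical
  refine ⟨Finset.univ.image (fun t => (-Pi.single t 1, -lo t)) ∪
    Finset.univ.image (fun t => (Pi.single t 1, hi t)), ?_⟩
  ext x
  simp only [Finset.set_biInter_inter, Finset.set_biInter_finset_image]
  simp [intHalfspace, Pi.le_def, neg_dotProduct]

theorem exists_biInter_intHalfspace_eq_inter {C : Set (EuclideanSpace ℝ σ)} (hC : Convex ℝ C)
    {R₀ : Finset ((σ → ℤ) × ℤ)} (hfin : (⋂ r ∈ R₀, intHalfspace r).Finite) :
    ∃ R : Finset ((σ → ℤ) × ℤ),
      ⋂ r ∈ R, intHalfspace r = (⋂ r ∈ R₀, intHalfspace r) ∩ {x | toEuclidean x ∈ C} := by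
  classical
  set P := hfin.toFinset
  have hsep : ∀ z ∈ P.filter (toEuclidean · ∉ C),
      ∃ a : σ → ℤ, ∀ y ∈ P.filter (toEuclidean · ∈ C), a ⬝ᵥ y < a ⬝ᵥ z := fun z hz =>
    exists_dotProduct_lt_of_convex hC (fun y hy => (Finset.mem_filter.1 hy).2)
      (Finset.mem_filter.1 hz).2
  choose! a ha using hsep
  refine ⟨R₀ ∪ (P.filter (toEuclidean · ∉ C)).image (fun z => (a z, a z ⬝ᵥ z - 1)), ?_⟩
  ext x
  simp only [Finset.set_biInter_inter, Finset.set_biInter_finset_image, Set.mem_inter_iff,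
    Set.mem_iInter, Set.mem_ofPred_eq, intHalfspace, and_congr_right_iff]
  intro hx
  have hxP : x ∈ P := hfin.mem_toFinset.2 (Set.mem_iInter₂.2 hx)
  constructor
  · intro hsep
    by_contra hxC
    have := hsep x (Finset.mem_filter.2 ⟨hxP, hxC⟩)
    omega
  · intro hxC z hz
    have := ha z hz x (Finset.mem_filter.2 ⟨hxP, hxC⟩)
    omega

end Doignon

open Doignon

theorem doignon_general (d n : ℕ) (hn : 2 ^ d ≤ n)
    (K : Fin n → Set (Fin d → ℤ))
    (hlat : ∀ i, ∃ C : Set (EuclideanSpace ℝ (Fin d)), Convex ℝ C ∧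
      K i = {v : Fin d → ℤ | WithLp.toLp 2 (fun j => (v j : ℝ)) ∈ C})
    (hhelly : ∀ G : Finset (Fin n), G.card = 2 ^ d → (⋂ i ∈ G, K i).Nonempty) :
    (⋂ i, K i).Nonempty := by
  by_contra hempty
  choose C hC hKC using hlat
  have hwitness : ∀ G : Finset (Fin n), ∃ w, G.card = 2 ^ d → w ∈ ⋂ i ∈ G, K i := fun G => by
    by_cases hG : G.card = 2 ^ d
    · exact (hhelly G hG).imp fun w hw _ => hw
    · exact ⟨0, fun h => absurd h hG⟩
  choose w hw using hwitness
  obtain ⟨lo, hlo⟩ := (Set.finite_range w).bddBelow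
  obtain ⟨hi, hhi⟩ := (Set.finite_range w).bddAbove
  obtain ⟨R₀, hR₀⟩ := exists_biInter_intHalfspace_eq_Icc lo hi
  have hpoly : ∀ i, ∃ R : Finset ((Fin d → ℤ) × ℤ),
      ⋂ r ∈ R, intHalfspace r = Set.Icc lo hi ∩ K i := fun i => by
    rw [hKC i, ← hR₀]
    exact exists_biInter_intHalfspace_eq_inter (hC i) (hR₀ ▸ Set.finite_Icc lo hi)
  choose P hP using hpoly
  obtain ⟨t, ht, hPt⟩ := exists_card_le_biInter_eq_empty P <| by
    simp_rw [hP]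
    exact Set.subset_eq_empty (Set.iInter_mono fun i => Set.inter_subset_right)
      (Set.not_nonempty_iff_eq_empty.1 hempty)
  obtain ⟨G, htG, hG⟩ := Finset.exists_superset_card_eq (n := 2 ^ d) (by simpa using ht)
    (by simpa using hn)
  have : w G ∈ ⋂ i ∈ t, ⋂ r ∈ P i, intHalfspace r := by
    simp_rw [hP]
    exact Set.mem_iInter₂.2 fun i hi =>
      ⟨⟨hlo ⟨G, rfl⟩, hhi ⟨G, rfl⟩⟩, Set.mem_iInter₂.1 (hw G hG) i (htG hi)⟩
  rwa [hPt] at this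

/-- **Doignon's theorem.** The Helly number of the family of convex lattice sets in `ℝ^d`
(sets of the form `ℤ^d ∩ C` with `C ⊆ ℝ^d` convex) is `2^d`: if every `2^d` members of a
finite family of at least `2^d` convex lattice sets have a common point, then the whole
family has a common point. -/
theorem doignon (d n : ℕ) (hd : 1 ≤ d) (hn : 2 ^ d ≤ n)
    (K : Fin n → Set (Fin d → ℤ))
    (hlat : ∀ i, ∃ C : Set (EuclideanSpace ℝ (Fin d)), Convex ℝ C ∧
      K i = {v : Fin d → ℤ | WithLp.toLp 2 (fun j => (v j : ℝ)) ∈ C})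
    (hhelly : ∀ G : Finset (Fin n), G.card = 2 ^ d → (⋂ i ∈ G, K i).Nonempty) :
    (⋂ i, K i).Nonempty :=
  doignon_general d n hn K hlat hhelly
end

section
/- For every d ≥ 1 there is a constant c_d > 0 with the following property: for every ε with 0 < ε ≤ 1 and every finite set X of n ≥ d+1 points in ℝ^d, there exists a finite set F ⊆ ℝ^d with |F| ≤ c_d / ε^{d+1} such that for every subset Y ⊆ X with |Y| ≥ εn the convex hull conv Y contains a point of F. -/
/-!
A Helly-type centerpoint argument gives a point `p` in the convex hull of every `A ⊆ Y` that
misses at most `s` points of `Y`, as long as `(d + 1) s < |Y|`. Carathéodory then peels off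
`r ≈ |Y| / (d + 1)²` pairwise disjoint sets of at most `d + 1` points whose hulls contain `p`, and
the colorful Carathéodory theorem turns any `d + 1` of them into a rainbow `(d + 1)`-subset whose
hull contains `p`; distinct choices give distinct subsets. So `p` lies in the hulls of at least
`C(r, d + 1) ≳ (ε n)^(d + 1)` of the `(d + 1)`-subsets of any `Y` with `|Y| ≥ ε n`. Adding such
points to `F` greedily, each new point pierces that many of the at most `C(n, d + 1)` subsets of
`X` not yet pierced, hence `|F| ≲ ε^-(d + 1)`.
-/

open Finset Module Metric
open scoped Classical

section Caratheodory

variable {V : Type*} [AddCommGroup V] [Module ℝ V]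

theorem exists_subset_card_le_finrank_add_one_of_vectorSpan_le [FiniteDimensional ℝ V]
    {W : Submodule ℝ V} {S : Finset V} (hSW : vectorSpan ℝ (S : Set V) ≤ W) {x : V}
    (hx : x ∈ convexHull ℝ (S : Set V)) :
    ∃ T ⊆ S, #T ≤ finrank ℝ W + 1 ∧ x ∈ convexHull ℝ (T : Set V) := by
  rw [convexHull_eq_union] at hx
  simp only [Set.mem_iUnion, exists_prop] at hx
  obtain ⟨T, hTS, hT, hxT⟩ := hx
  refine ⟨T, mod_cast hTS, ?_, hxT⟩
  have hTW : vectorSpan ℝ (Set.range ((↑) : T → V)) ≤ W :=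
    (vectorSpan_mono ℝ (by simpa using hTS)).trans hSW
  simpa using hT.card_le_finrank_succ.trans (Nat.add_le_add_right (Submodule.finrank_mono hTW) 1)

theorem mem_convexHull_filter_eq_of_le {S : Finset V} {q : V} {ℓ : V →ₗ[ℝ] ℝ}
    (hq : q ∈ convexHull ℝ (S : Set V)) (hS : ∀ x ∈ S, ℓ x ≤ ℓ q) :
    q ∈ convexHull ℝ (({x ∈ S | ℓ x = ℓ q} : Finset V) : Set V) := by
  obtain ⟨w, hw₀, hw₁, hwq⟩ := Finset.mem_convexHull'.1 hq
  have hgap : ∑ x ∈ S, w x * (ℓ q - ℓ x) = 0 := by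
    simp only [mul_sub, sum_sub_distrib, ← sum_mul, hw₁, one_mul]
    rw [← hwq]
    simp [map_sum]
  have hzero := (sum_eq_zero_iff_of_nonneg fun x hx =>
    mul_nonneg (hw₀ x hx) (sub_nonneg.2 (hS x hx))).1 hgap
  have hsupp : ∀ x ∈ S, w x ≠ 0 → ℓ x = ℓ q := fun x hx hwx =>
    (sub_eq_zero.1 ((mul_eq_zero.1 (hzero x hx)).resolve_left hwx)).symm
  refine Finset.mem_convexHull'.2 ⟨w, fun x hx => hw₀ x (mem_filter.1 hx).1, ?_, ?_⟩
  · rwa [sum_filter_of_ne hsupp]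
  · rwa [sum_filter_of_ne fun x hx hwx => hsupp x hx (left_ne_zero_of_smul hwx)]

theorem exists_subset_card_le_finrank_of_mem_convexHull_of_le [FiniteDimensional ℝ V]
    {S : Finset V} {q : V} {ℓ : V →ₗ[ℝ] ℝ} (hℓ : ℓ ≠ 0)
    (hq : q ∈ convexHull ℝ (S : Set V)) (hS : ∀ x ∈ S, ℓ x ≤ ℓ q) :
    ∃ T ⊆ S, #T ≤ finrank ℝ V ∧ q ∈ convexHull ℝ (T : Set V) := by
  have hspan : vectorSpan ℝ (({x ∈ S | ℓ x = ℓ q} : Finset V) : Set V) ≤ LinearMap.ker ℓ := by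
    refine Submodule.span_le.2 ?_
    rintro _ ⟨x, hx, y, hy, rfl⟩
    rw [mem_coe, mem_filter] at hx hy
    simp [hx.2, hy.2]
  obtain ⟨T, hT, hTcard, hqT⟩ := exists_subset_card_le_finrank_add_one_of_vectorSpan_le hspan
    (mem_convexHull_filter_eq_of_le hq hS)
  exact ⟨T, hT.trans (filter_subset _ _),
    Module.Dual.finrank_ker_add_one_of_ne_zero hℓ ▸ hTcard, hqT⟩

end Caratheodory

section Colorful

variable {V : Type*} [NormedAddCommGroup V] [InnerProductSpace ℝ V]

theorem real_inner_sub_nonpos_of_infDist_eq_dist {K : Set V} (hK : Convex ℝ K) {p q x : V}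
    (hq : q ∈ K) (hpq : infDist p K = dist p q) (hx : x ∈ K) :
    inner ℝ (p - q) (x - q) ≤ 0 :=
  (norm_eq_iInf_iff_real_inner_le_zero hK hq).1
    (by simpa [infDist_eq_iInf, dist_eq_norm] using hpq.symm) x hx

theorem infDist_lt_dist_of_real_inner_pos {K : Set V} (hK : Convex ℝ K) {p q v : V}
    (hq : q ∈ K) (hv : v ∈ K) (hpos : 0 < inner ℝ (p - q) (v - q)) :
    infDist p K < dist p q :=
  (infDist_le_dist_of_mem hq).lt_of_ne fun hpq =>
    (real_inner_sub_nonpos_of_infDist_eq_dist hK hq hpq hv).not_gt hpos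

variable [FiniteDimensional ℝ V] {ι : Type*} [Fintype ι]

/- `q` lies on the supporting hyperplane `⟪p - q, ·⟫ = ⟪p - q, q⟫` of the hull, hence in the hull of
at most `finrank ℝ V` of the `f i`. Replacing an unused `f i₀` by a point of `C i₀` on the far
side of `p` creates a hull containing points closer to `p` than `q`. -/
theorem exists_rainbow_infDist_convexHull_lt {C : ι → Finset V} {p q : V} {f : ι → V}
    (hι : finrank ℝ V < Fintype.card ι) (hp : ∀ i, p ∈ convexHull ℝ (C i : Set V))
    (hf : ∀ i, f i ∈ C i) (hq : q ∈ convexHull ℝ (Set.range f))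
    (hpq : infDist p (convexHull ℝ (Set.range f)) = dist p q) (hne : p ≠ q) :
    ∃ g : ι → V, (∀ i, g i ∈ C i) ∧ infDist p (convexHull ℝ (Set.range g)) < dist p q := by
  set ℓ : V →ₗ[ℝ] ℝ := innerₛₗ ℝ (p - q)
  have hℓ : ℓ ≠ 0 := fun h => by
    have := LinearMap.congr_fun h (p - q)
    simp only [ℓ, innerₛₗ_apply_apply, LinearMap.zero_apply, inner_self_eq_zero] at this
    exact hne (sub_eq_zero.1 this)
  have hsupp : ∀ x ∈ convexHull ℝ (Set.range f), ℓ x ≤ ℓ q := fun x hx => by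
    have := real_inner_sub_nonpos_of_infDist_eq_dist (convex_convexHull ℝ _) hq hpq hx
    simpa only [ℓ, innerₛₗ_apply_apply, inner_sub_right, sub_nonpos] using this
  obtain ⟨T, hTf, hTcard, hqT⟩ := exists_subset_card_le_finrank_of_mem_convexHull_of_le hℓ
    (S := univ.image f) (by simpa using hq)
    fun x hx => hsupp x (subset_convexHull ℝ _ (by simpa using hx))
  obtain ⟨J, -, hJinj, rfl⟩ := exists_subset_injOn_image_eq_of_surjOn (f := f) Set.univ T
    fun t ht => by simpa using hTf ht
  obtain ⟨i₀, -, hi₀⟩ := exists_mem_notMem_of_card_lt_card (s := J) (t := univ) <| by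
    rw [← card_image_of_injOn hJinj, card_univ]
    omega
  obtain ⟨v, hv, hpv⟩ := (ℓ.convexOn convex_univ).exists_ge_of_mem_convexHull
    (Set.subset_univ _) (hp i₀)
  refine ⟨Function.update f i₀ v, fun i => ?_, ?_⟩
  · rcases eq_or_ne i i₀ with rfl | hi
    · simpa using hv
    · simpa [hi] using hf i
  have hJ : ((J.image f : Finset V) : Set V) ⊆ Set.range (Function.update f i₀ v) := by
    intro _ hx
    obtain ⟨j, hj, rfl⟩ := mem_image.1 hx
    exact ⟨j, Function.update_of_ne (ne_of_mem_of_not_mem hj hi₀) _ _⟩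
  refine infDist_lt_dist_of_real_inner_pos (convex_convexHull ℝ _) (convexHull_mono hJ hqT)
    (subset_convexHull ℝ _ ⟨i₀, Function.update_self _ _ _⟩) ?_
  have hpq : 0 < inner ℝ (p - q) (p - q) := real_inner_self_pos.2 (sub_ne_zero.2 hne)
  simp only [ℓ, innerₛₗ_apply_apply] at hpv
  rw [inner_sub_right] at hpq ⊢
  linarith

theorem colorful_caratheodory_s16 (hι : finrank ℝ V < Fintype.card ι) (C : ι → Finset V) {p : V}
    (hp : ∀ i, p ∈ convexHull ℝ (C i : Set V)) :
    ∃ f : ι → V, (∀ i, f i ∈ C i) ∧ p ∈ convexHull ℝ (Set.range f) := by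
  have hne : (Fintype.piFinset C).Nonempty := Fintype.piFinset_nonempty.2 fun i =>
    coe_nonempty.1 (convexHull_nonempty_iff.1 ⟨p, hp i⟩)
  obtain ⟨f, hfC, hmin⟩ :=
    exists_min_image _ (fun f => infDist p (convexHull ℝ (Set.range f))) hne
  rw [Fintype.mem_piFinset] at hfC
  refine ⟨f, hfC, ?_⟩
  have : Nonempty ι := Fintype.card_pos_iff.1 (by omega)
  obtain ⟨q, hq, hpq⟩ :=
    ((Set.finite_range f).isCompact_convexHull (𝕜 := ℝ)).exists_infDist_eq_dist
      ((Set.range_nonempty f).mono (subset_convexHull ℝ _)) p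
  by_contra hpK
  obtain ⟨g, hgC, hlt⟩ :=
    exists_rainbow_infDist_convexHull_lt hι hp hfC hq hpq (by rintro rfl; exact hpK hq)
  exact (hmin g (Fintype.mem_piFinset.2 hgC)).not_gt (hpq ▸ hlt)

end Colorful

section Centerpoint

variable {V : Type*} [AddCommGroup V] [Module ℝ V] [FiniteDimensional ℝ V]

theorem exists_forall_mem_convexHull_of_card_sdiff_le {Y : Finset V} {s : ℕ}
    (hs : (finrank ℝ V + 1) * s < #Y) :
    ∃ p : V, ∀ A ⊆ Y, #(Y \ A) ≤ s → p ∈ convexHull ℝ (A : Set V) := by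
  set 𝒜 := {A ∈ Y.powerset | #(Y \ A) ≤ s}
  obtain ⟨p, hp⟩ : (⋂ A ∈ 𝒜, convexHull ℝ (A : Set V)).Nonempty := by
    refine Convex.helly_theorem' (fun A _ => convex_convexHull ℝ _) fun I hI hIcard => ?_
    have hunion : #(I.biUnion (Y \ ·)) < #Y := calc
      #(I.biUnion (Y \ ·)) ≤ #I * s :=
        card_biUnion_le_card_mul _ _ _ fun A hA => (mem_filter.1 (hI hA)).2
      _ ≤ (finrank ℝ V + 1) * s := Nat.mul_le_mul_right s hIcard
      _ < #Y := hs
    obtain ⟨y, hyY, hyI⟩ := exists_mem_notMem_of_card_lt_card hunion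
    refine ⟨y, Set.mem_iInter₂.2 fun A hA => subset_convexHull ℝ _ ?_⟩
    by_contra hyA
    exact hyI (mem_biUnion.2 ⟨A, hA, mem_sdiff.2 ⟨hyY, hyA⟩⟩)
  exact ⟨p, fun A hAY hA => Set.mem_iInter₂.1 hp A (mem_filter.2 ⟨mem_powerset.2 hAY, hA⟩)⟩

/- A family of maximal size with these properties must already have more than `s` points in its
union: otherwise Carathéodory applied outside the union yields a further member. -/
theorem exists_pairwiseDisjoint_mem_convexHull_of_card_sdiff_le {Y : Finset V} {p : V} {s : ℕ}
    (hp : ∀ A ⊆ Y, #(Y \ A) ≤ s → p ∈ convexHull ℝ (A : Set V)) :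
    ∃ 𝒯 : Finset (Finset V), (𝒯 : Set (Finset V)).PairwiseDisjoint id ∧
      (∀ T ∈ 𝒯, T ⊆ Y ∧ #T ≤ finrank ℝ V + 1 ∧ p ∈ convexHull ℝ (T : Set V)) ∧
      s < #𝒯 * (finrank ℝ V + 1) := by
  set Packing : Finset (Finset V) → Prop := fun 𝒯 => (𝒯 : Set (Finset V)).PairwiseDisjoint id ∧
    ∀ T ∈ 𝒯, T ⊆ Y ∧ #T ≤ finrank ℝ V + 1 ∧ p ∈ convexHull ℝ (T : Set V)
  obtain ⟨𝒯, h𝒯, hmax⟩ := exists_max_image {𝒯 ∈ Y.powerset.powerset | Packing 𝒯} card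
    ⟨∅, mem_filter.2 ⟨empty_mem_powerset _, by simp [Packing]⟩⟩
  obtain ⟨-, hdisj, h𝒯⟩ := mem_filter.1 h𝒯
  refine ⟨𝒯, hdisj, h𝒯, not_le.1 fun hsmall => ?_⟩
  set U := 𝒯.biUnion id
  have hU : #(Y \ (Y \ U)) ≤ s := calc
    #(Y \ (Y \ U)) ≤ #U := card_le_card (sdiff_sdiff_self_left Y U ▸ inter_subset_right)
    _ ≤ #𝒯 * (finrank ℝ V + 1) := card_biUnion_le_card_mul _ _ _ fun T hT => (h𝒯 T hT).2.1
    _ ≤ s := hsmall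
  obtain ⟨T, hTU, hTcard, hpT⟩ := exists_subset_card_le_finrank_add_one_of_vectorSpan_le
    (W := ⊤) le_top (hp _ sdiff_subset hU)
  rw [finrank_top] at hTcard
  have hdisjT : ∀ T' ∈ 𝒯, Disjoint T T' := fun T' hT' =>
    disjoint_left.2 fun x hxT hxT' => (mem_sdiff.1 (hTU hxT)).2 (mem_biUnion.2 ⟨T', hT', hxT'⟩)
  have hT𝒯 : T ∉ 𝒯 := fun hT => by
    obtain ⟨x, hx⟩ := coe_nonempty.1 (convexHull_nonempty_iff.1 ⟨p, hpT⟩)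
    exact disjoint_left.1 (hdisjT T hT) hx hx
  have hbig := hmax (insert T 𝒯) <| mem_filter.2 ⟨?_, ?_, ?_⟩
  · rw [card_insert_of_notMem hT𝒯] at hbig
    omega
  · exact mem_powerset.2 (insert_subset (mem_powerset.2 (hTU.trans sdiff_subset))
      fun T' hT' => mem_powerset.2 (h𝒯 T' hT').1)
  · rw [coe_insert]
    exact hdisj.insert fun T' hT' _ => hdisjT T' hT'
  · exact (forall_mem_insert _ _ _).2 ⟨⟨hTU.trans sdiff_subset, hTcard, hpT⟩, h𝒯⟩

end Centerpoint

section Selection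

variable {V : Type*} [NormedAddCommGroup V] [InnerProductSpace ℝ V] [FiniteDimensional ℝ V]

/- A `(d + 1)`-subset `𝒥` of the family is recovered from its rainbow set `S` as the members of
the family that meet `S`. -/
theorem choose_card_le_card_filter_mem_convexHull {𝒯 : Finset (Finset V)} {Y : Finset V} {p : V}
    (hdisj : (𝒯 : Set (Finset V)).PairwiseDisjoint id)
    (h𝒯 : ∀ T ∈ 𝒯, T ⊆ Y ∧ p ∈ convexHull ℝ (T : Set V)) :
    (#𝒯).choose (finrank ℝ V + 1) ≤
      #((Y.powersetCard (finrank ℝ V + 1)).filter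
        fun S : Finset V => p ∈ convexHull ℝ (S : Set V)) := by
  rw [← card_powersetCard]
  refine card_le_card_of_surjOn (fun S : Finset V => {T ∈ 𝒯 | ¬Disjoint T S}) fun 𝒥 h𝒥 => ?_
  obtain ⟨h𝒥𝒯, h𝒥card⟩ := mem_powersetCard.1 h𝒥
  obtain ⟨f, hf, hpf⟩ := colorful_caratheodory_s16 (ι := 𝒥) (by simp [h𝒥card]) (fun T => T.1)
    fun T => (h𝒯 T (h𝒥𝒯 T.2)).2
  have hmem : ∀ T ∈ 𝒯, ∀ T' : 𝒥, f T' ∈ T → T = T' := fun T hT T' hT' =>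
    hdisj.elim hT (h𝒥𝒯 T'.2) (not_disjoint_iff.2 ⟨_, hT', hf T'⟩)
  have hinj : Function.Injective f := fun T T' h =>
    Subtype.ext (hmem T (h𝒥𝒯 T.2) T' (h ▸ hf T))
  refine ⟨univ.image f, mem_filter.2 ⟨mem_powersetCard.2 ⟨?_, ?_⟩, by simpa using hpf⟩, ?_⟩
  · intro _ hx
    obtain ⟨T, -, rfl⟩ := mem_image.1 hx
    exact (h𝒯 T (h𝒥𝒯 T.2)).1 (hf T)
  · rw [card_image_of_injective _ hinj, card_univ, Fintype.card_coe, h𝒥card]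
  · ext T
    refine ⟨fun hT => ?_, fun hT => mem_filter.2 ⟨h𝒥𝒯 hT,
      not_disjoint_iff.2 ⟨_, hf ⟨T, hT⟩, mem_image_of_mem _ (mem_univ _)⟩⟩⟩
    obtain ⟨hT𝒯, hmeet⟩ := mem_filter.1 hT
    obtain ⟨_, hxT, hxf⟩ := not_disjoint_iff.1 hmeet
    obtain ⟨T', -, rfl⟩ := mem_image.1 hxf
    exact hmem T hT𝒯 T' hxT ▸ T'.2

theorem first_selection_lemma {Y : Finset V} {r : ℕ} (hr : (finrank ℝ V + 1) ^ 2 * r ≤ #Y) :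
    ∃ p : V, r.choose (finrank ℝ V + 1) ≤
      #((Y.powersetCard (finrank ℝ V + 1)).filter
        fun S : Finset V => p ∈ convexHull ℝ (S : Set V)) := by
  obtain _ | r := r
  · exact ⟨0, by simp⟩
  set d := finrank ℝ V
  obtain ⟨p, hp⟩ := exists_forall_mem_convexHull_of_card_sdiff_le (V := V) (Y := Y)
    (s := (d + 1) * r + d) (by nlinarith)
  obtain ⟨𝒯, hdisj, h𝒯, hcard⟩ := exists_pairwiseDisjoint_mem_convexHull_of_card_sdiff_le hp
  have hr𝒯 : r + 1 ≤ #𝒯 := by nlinarith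
  exact ⟨p, (Nat.choose_le_choose _ hr𝒯).trans
    (choose_card_le_card_filter_mem_convexHull hdisj fun T hT => ⟨(h𝒯 T hT).1, (h𝒯 T hT).2.2⟩)⟩

end Selection

/- Induction on the number of `k`-subsets of `X` missed by `F₀`: while some large `Y` has no point
of `F₀` in its hull, the point given by `hsel` pierces at least `h` subsets that `F₀` missed. -/
theorem exists_weak_net_of_forall_le_card_filter {V : Type*} [AddCommGroup V] [Module ℝ V]
    {X : Finset V} {k h : ℕ} (hh : 0 < h) (large : Finset V → Prop)
    (hsel : ∀ Y ⊆ X, large Y → ∃ p : V,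
      h ≤ #((Y.powersetCard k).filter fun S : Finset V => p ∈ convexHull ℝ (S : Set V))) :
    ∃ F : Finset V, #F * h ≤ (#X).choose k ∧
      ∀ Y ⊆ X, large Y → ∃ p ∈ F, p ∈ convexHull ℝ (Y : Set V) := by
  set missed : Finset V → Finset (Finset V) := fun F =>
    (X.powersetCard k).filter fun S : Finset V => ∀ q ∈ F, q ∉ convexHull ℝ (S : Set V)
  suffices key : ∀ N, ∀ F₀, #(missed F₀) = N → ∃ F : Finset V, #F * h ≤ #F₀ * h + N ∧
      ∀ Y ⊆ X, large Y → ∃ p ∈ F, p ∈ convexHull ℝ (Y : Set V) by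
    obtain ⟨F, hF, hnet⟩ := key _ ∅ rfl
    refine ⟨F, hF.trans ?_, hnet⟩
    simpa using card_filter_le (X.powersetCard k) _
  intro N
  induction N using Nat.strong_induction_on with
  | _ N ih =>
  intro F₀ hN
  by_cases hnet : ∀ Y ⊆ X, large Y → ∃ p ∈ F₀, p ∈ convexHull ℝ (Y : Set V)
  · exact ⟨F₀, by omega, hnet⟩
  push Not at hnet
  obtain ⟨Y, hYX, hY, hmiss⟩ := hnet
  obtain ⟨p, hp⟩ := hsel Y hYX hY
  set 𝒮 := (Y.powersetCard k).filter fun S : Finset V => p ∈ convexHull ℝ (S : Set V)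
  have h𝒮 : 𝒮 ⊆ missed F₀ := fun S hS => by
    obtain ⟨hSY, -⟩ := mem_filter.1 hS
    obtain ⟨hSY, hSk⟩ := mem_powersetCard.1 hSY
    exact mem_filter.2 ⟨mem_powersetCard.2 ⟨hSY.trans hYX, hSk⟩,
      fun q hq hqS => hmiss q hq (convexHull_mono (coe_subset.2 hSY) hqS)⟩
  have hnew : missed (insert p F₀) ⊆ missed F₀ \ 𝒮 := fun S hS => by
    obtain ⟨hSX, hSF⟩ := mem_filter.1 hS
    exact mem_sdiff.2 ⟨mem_filter.2 ⟨hSX, fun q hq => hSF q (mem_insert_of_mem hq)⟩,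
      fun hS𝒮 => hSF p (mem_insert_self p F₀) (mem_filter.1 hS𝒮).2⟩
  have hcard : #(missed (insert p F₀)) + h ≤ N := by
    have := card_le_card hnew
    rw [card_sdiff_of_subset h𝒮] at this
    have := card_le_card h𝒮
    omega
  obtain ⟨F, hF, hnet⟩ := ih _ (by omega) (insert p F₀) rfl
  refine ⟨F, ?_, hnet⟩
  have := card_insert_le p F₀
  nlinarith

theorem le_floor_div_sq_add_one_sub {x : ℝ} {k : ℕ} (hk : 1 ≤ k) (hx : 2 * k ^ 3 ≤ x) :
    x / (2 * k ^ 2) ≤ ⌊x / k ^ 2⌋₊ + 1 - k := by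
  have hk' : (1 : ℝ) ≤ k := by exact_mod_cast hk
  have hfloor := Nat.lt_floor_add_one (x / k ^ 2)
  have hsplit : x / k ^ 2 = x / (2 * k ^ 2) + x / (2 * k ^ 2) := by
    field_simp
    ring
  have hhalf : (k : ℝ) ≤ x / (2 * k ^ 2) := by
    rw [le_div_iff₀ (by positivity)]
    linarith
  linarith

theorem choose_le_div_pow_mul_choose (n : ℕ) {r k : ℕ} (hkr : k ≤ r) :
    (n.choose k : ℝ) ≤ (n / (r + 1 - k)) ^ k * r.choose k := by
  have hpos : (0 : ℝ) < r + 1 - k := by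
    have : (k : ℝ) ≤ r := by exact_mod_cast hkr
    linarith
  have hlow := Nat.pow_le_choose (α := ℝ) k r
  rw [Nat.cast_sub (by omega), Nat.cast_add_one] at hlow
  calc (n.choose k : ℝ) ≤ n ^ k / k.factorial := Nat.choose_le_pow_div k n
    _ = (n / (r + 1 - k)) ^ k * ((r + 1 - k) ^ k / k.factorial) := by
      rw [div_pow]
      field_simp
    _ ≤ (n / (r + 1 - k)) ^ k * r.choose k := by gcongr

theorem cast_le_div_pow_of_mul_choose_le {m n r k : ℕ} {ε : ℝ} (hk : 0 < k) (hε : 0 < ε)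
    (hkr : k ≤ r) (hr : ε * n / (2 * k ^ 2) ≤ r + 1 - k) (h : m * r.choose k ≤ n.choose k) :
    (m : ℝ) ≤ (2 * k ^ 2) ^ k / ε ^ k := by
  have hpos : (0 : ℝ) < r + 1 - k := by
    have : (k : ℝ) ≤ r := by exact_mod_cast hkr
    linarith
  have hrk : (0 : ℝ) < r.choose k := by exact_mod_cast Nat.choose_pos hkr
  rw [div_le_iff₀ (by positivity)] at hr
  rw [← div_pow]
  calc (m : ℝ) ≤ n.choose k / r.choose k := by
        rw [le_div_iff₀ hrk]
        exact_mod_cast h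
    _ ≤ (n / (r + 1 - k)) ^ k := by
        rw [div_le_iff₀ hrk]
        exact choose_le_div_pow_mul_choose n hkr
    _ ≤ (2 * k ^ 2 / ε) ^ k := by
        refine pow_le_pow_left₀ (div_nonneg (Nat.cast_nonneg _) hpos.le) ?_ k
        rw [div_le_div_iff₀ hpos hε]
        linarith

theorem weak_epsilon_net_general (d : ℕ) :
    ∃ c : ℝ, 0 < c ∧
      ∀ ε : ℝ, 0 < ε → ε ≤ 1 →
        ∀ X : Finset (EuclideanSpace ℝ (Fin d)), d + 1 ≤ X.card →
          ∃ F : Finset (EuclideanSpace ℝ (Fin d)),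
            (F.card : ℝ) ≤ c / ε ^ (d + 1) ∧
            ∀ Y ⊆ X, ε * (X.card : ℝ) ≤ (Y.card : ℝ) →
              ∃ p ∈ F, p ∈ convexHull ℝ (Y : Set (EuclideanSpace ℝ (Fin d))) := by
  have hdim : finrank ℝ (EuclideanSpace ℝ (Fin d)) = d := finrank_euclideanSpace_fin
  set k := d + 1
  refine ⟨(2 * k ^ 2) ^ k + 2 * k ^ 3, by positivity, fun ε hε hε1 X hX => ?_⟩
  have hεn : 0 < ε * #X := mul_pos hε (by exact_mod_cast (by omega : 0 < #X))
  by_cases hsmall : ε * #X < 2 * k ^ 3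
  · refine ⟨X, ?_, fun Y hYX hY => ?_⟩
    · rw [le_div_iff₀ (by positivity)]
      nlinarith [pow_le_of_le_one hε.le hε1 (by omega : k ≠ 0),
        pow_pos (by positivity : (0 : ℝ) < 2 * k ^ 2) k]
    · obtain ⟨y, hy⟩ : Y.Nonempty := card_pos.1 (by exact_mod_cast hεn.trans_le hY)
      exact ⟨y, hYX hy, subset_convexHull ℝ _ hy⟩
  push Not at hsmall
  set r := ⌊ε * #X / k ^ 2⌋₊
  have hr : ε * #X / (2 * k ^ 2) ≤ r + 1 - k := le_floor_div_sq_add_one_sub (by omega) hsmall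
  have hkr : k ≤ r := Nat.lt_add_one_iff.1 <| by
    exact_mod_cast (sub_pos.1 ((div_pos hεn (by positivity)).trans_le hr))
  have hfloor : (k ^ 2 * r : ℝ) ≤ ε * #X := by
    have := Nat.floor_le (div_nonneg hεn.le (sq_nonneg (k : ℝ)))
    rwa [le_div_iff₀ (by positivity), mul_comm] at this
  obtain ⟨F, hF, hnet⟩ := exists_weak_net_of_forall_le_card_filter (Nat.choose_pos hkr)
      (fun Y => ε * #X ≤ #Y) fun Y _ hY => by
    have hrY : (finrank ℝ (EuclideanSpace ℝ (Fin d)) + 1) ^ 2 * r ≤ #Y := by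
      rw [hdim]
      exact_mod_cast hfloor.trans hY
    simpa only [hdim] using first_selection_lemma hrY
  refine ⟨F, (cast_le_div_pow_of_mul_choose_le (by omega) hε hkr hr hF).trans ?_, hnet⟩
  gcongr
  linarith [(by positivity : (0 : ℝ) ≤ 2 * k ^ 3)]

/-- **The weak ε-net theorem** (Alon–Bárány–Füredi–Kleitman). For every `d ≥ 1` there is a
constant `c_d > 0` such that for every `0 < ε ≤ 1` and every finite set `X` of at least
`d+1` points in `ℝ^d` there is a weak `ε`-net `F` for `X` of size at most `c_d / ε^{d+1}`:
`F` meets the convex hull of every `Y ⊆ X` with `|Y| ≥ ε|X|`. -/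
theorem weak_epsilon_net (d : ℕ) (hd : 1 ≤ d) :
    ∃ c : ℝ, 0 < c ∧
      ∀ ε : ℝ, 0 < ε → ε ≤ 1 →
        ∀ X : Finset (EuclideanSpace ℝ (Fin d)), d + 1 ≤ X.card →
          ∃ F : Finset (EuclideanSpace ℝ (Fin d)),
            (F.card : ℝ) ≤ c / ε ^ (d + 1) ∧
            ∀ Y ⊆ X, ε * (X.card : ℝ) ≤ (Y.card : ℝ) →
              ∃ p ∈ F, p ∈ convexHull ℝ (Y : Set (EuclideanSpace ℝ (Fin d))) :=
  weak_epsilon_net_general d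
end

section
/- Let r ≥ 1 and d ≥ 1 be integers and let X be a set of r(d+1) points in ℝ^d. Then X can be partitioned into r pairwise disjoint sets S_1, ..., S_r, each of size exactly d+1, such that the convex hulls conv S_1, ..., conv S_r have a point in common. -/
/-!
Among all partitions of `X` into `r` parts of size `d + 1` and all points `x`, minimize the sum
of the squared distances from `x` to the convex hulls of the parts. At a minimum, the nearest
points `y i` satisfy `∑ i, (x - y i) = 0`. If some `y i₀ ≠ x`, then `y i₀` lies on a facet of
its simplex, opposite to a vertex `q` with `⟪x - y i₀, q - y i₀⟫ ≤ 0`; balancing yields a part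
`j` with `⟪x - y j, q - x⟫ > 0`, so adding `q` to part `j` brings its hull strictly closer to
`x`. By Carathéodory some other point `p` of the enlarged part is superfluous, and exchanging
`p` and `q` decreases the sum: a contradiction.
-/

open Finset Function Metric Module
open scoped RealInnerProductSpace

theorem Finset.map_swap_eq_self {α : Type*} [DecidableEq α] {s : Finset α} {p q : α}
    (hp : p ∉ s) (hq : q ∉ s) : s.map (Equiv.swap p q).toEmbedding = s := by
  ext z
  rw [mem_map_equiv, Equiv.symm_swap]
  rcases eq_or_ne z p with rfl | hzp
  · simp [hp, hq]
  rcases eq_or_ne z q with rfl | hzq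
  · simp [hp, hq]
  rw [Equiv.swap_apply_of_ne_of_ne hzp hzq]

structure IsUniformPartition {α ι : Type*} (X : Finset α) (k : ℕ) (S : ι → Finset α) : Prop where
  subset : ∀ i, S i ⊆ X
  pairwise_disjoint : Pairwise (Disjoint on S)
  exists_mem : ∀ x ∈ X, ∃ i, x ∈ S i
  card_eq : ∀ i, (S i).card = k

namespace IsUniformPartition

variable {α ι : Type*} {X : Finset α} {k : ℕ} {S : ι → Finset α}

theorem exists_of_card_eq [Fintype ι] (h : X.card = Fintype.card ι * k) :
    ∃ S : ι → Finset α, IsUniformPartition X k S := by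
  classical
  let e : ι × Fin k ≃ X := Fintype.equivOfCardEq (by simp [h])
  have he (i : ι) : Function.Injective fun m => (e (i, m) : α) := fun m m' hm => by
    simpa using e.injective (Subtype.ext hm)
  refine ⟨fun i => univ.image fun m => (e (i, m) : α), ⟨?_, ?_, ?_, ?_⟩⟩
  · intro i
    simp [subset_iff]
  · intro i j hij
    simp only [onFun, disjoint_left, mem_image, mem_univ, true_and, not_exists]
    rintro _ ⟨m, rfl⟩ m' hm'
    exact hij (congrArg Prod.fst (e.injective (Subtype.ext hm'))).symm
  · intro x hx
    exact ⟨(e.symm ⟨x, hx⟩).1, mem_image.mpr ⟨(e.symm ⟨x, hx⟩).2, mem_univ _, by simp⟩⟩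
  · intro i
    rw [card_image_of_injective _ (he i), card_univ, Fintype.card_fin]

theorem nonempty (hS : IsUniformPartition X (k + 1) S) (i : ι) : (S i).Nonempty :=
  card_pos.mp (by rw [hS.card_eq]; omega)

theorem setOf_finite [Finite ι] : {S : ι → Finset α | IsUniformPartition X k S}.Finite :=
  (Set.Finite.pi (t := fun _ => (X.powerset : Set (Finset α))) fun _ =>
    X.powerset.finite_toSet).subset fun _ hS i _ => mem_powerset.mpr (hS.subset i)

theorem map_swap [DecidableEq α] (hS : IsUniformPartition X k S) {p q : α} (hp : p ∈ X)
    (hq : q ∈ X) : IsUniformPartition X k fun i => (S i).map (Equiv.swap p q).toEmbedding := by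
  have hX : X.map (Equiv.swap p q).toEmbedding = X := map_perm fun z hz => by
    rcases (Equiv.swap_apply_ne_self_iff.mp hz).2 with rfl | rfl <;> assumption
  refine ⟨fun i => hX ▸ map_subset_map.mpr (hS.subset i), fun i j hij => ?_, fun x hx => ?_,
    fun i => by rw [card_map, hS.card_eq]⟩
  · exact (disjoint_map _).mpr (hS.pairwise_disjoint hij)
  · rw [← hX, mem_map_equiv] at hx
    obtain ⟨i, hi⟩ := hS.exists_mem _ hx
    exact ⟨i, mem_map_equiv.mpr hi⟩

end IsUniformPartition

theorem exists_forall_sum_infDist_sq_le {α ι : Type*} [PseudoMetricSpace α] [ProperSpace α]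
    [Nonempty α] [Fintype ι] {K : ι → Set α} (hne : ∀ i, (K i).Nonempty)
    (hK : ∀ i, Bornology.IsBounded (K i)) :
    ∃ x, ∀ z, ∑ i, infDist x (K i) ^ 2 ≤ ∑ i, infDist z (K i) ^ 2 := by
  obtain ⟨a⟩ := ‹Nonempty α›
  obtain ⟨R, hR⟩ := (isBounded_iff_subset_closedBall a).mp (Bornology.isBounded_iUnion.mpr hK)
  have hKR (i) : K i ⊆ closedBall a R := (Set.subset_iUnion K i).trans hR
  refine (continuous_finsetSum _ fun i _ => (continuous_infDist_pt (K i)).pow 2).exists_forall_le'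
    a ?_
  filter_upwards [(tendsto_dist_right_cocompact_atTop a).eventually_ge_atTop (2 * R)] with x hx
  refine sum_le_sum fun i _ => pow_le_pow_left₀ infDist_nonneg ?_ 2
  obtain ⟨b, hb⟩ := hne i
  have hba : dist b a ≤ R := mem_closedBall.mp (hKR i hb)
  calc infDist a (K i) ≤ dist a b := infDist_le_dist_of_mem hb
    _ ≤ dist x a - R := by rw [dist_comm]; linarith
    _ ≤ infDist x (K i) := (le_infDist (hne i)).mpr fun c hc => by
        linarith [dist_triangle x c a, mem_closedBall.mp (hKR i hc)]

variable {F : Type*} [NormedAddCommGroup F] [InnerProductSpace ℝ F]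

theorem sum_sub_eq_zero_of_forall_sum_norm_sub_sq_le {ι : Type*} [Fintype ι] {x : F} {y : ι → F}
    (h : ∀ z, ∑ i, ‖x - y i‖ ^ 2 ≤ ∑ i, ‖z - y i‖ ^ 2) : ∑ i, (x - y i) = 0 := by
  set v := ∑ i, (x - y i)
  set n : ℝ := (Fintype.card ι : ℝ)
  set t : ℝ := 1 / (n + 1)
  have ht : 0 < t := by positivity
  have hnt : n * t < 1 := by rw [mul_one_div, div_lt_one (by positivity)]; linarith
  -- moving `x` to `x - t • v` changes the sum by `-t (2 - n t) ‖v‖²`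
  have hi (i) :
      ‖(x - t • v) - y i‖ ^ 2 = ‖x - y i‖ ^ 2 - 2 * t * ⟪x - y i, v⟫ + t ^ 2 * ‖v‖ ^ 2 := by
    rw [sub_right_comm, norm_sub_sq_real, inner_smul_right, norm_smul, Real.norm_eq_abs,
      abs_of_pos ht]
    ring
  have hmove : ∑ i, ‖(x - t • v) - y i‖ ^ 2 = ∑ i, ‖x - y i‖ ^ 2 - t * (2 - n * t) * ‖v‖ ^ 2 := by
    rw [sum_congr rfl fun i _ => hi i, sum_add_distrib, sum_sub_distrib, ← mul_sum, ← sum_inner,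
      real_inner_self_eq_norm_sq, sum_const, card_univ, nsmul_eq_mul]
    ring
  have hc : 0 < t * (2 - n * t) := mul_pos ht (by linarith)
  have hv : ‖v‖ ^ 2 ≤ 0 := by nlinarith [h (x - t • v)]
  simpa using hv

theorem inner_sub_nonpos_of_infDist_eq_dist {K : Set F} (hK : Convex ℝ K) {x y z : F} (hy : y ∈ K)
    (h : infDist x K = dist x y) (hz : z ∈ K) : ⟪x - y, z - y⟫ ≤ 0 :=
  (norm_eq_iInf_iff_real_inner_le_zero hK hy).mp
    (by simpa [infDist_eq_iInf, dist_eq_norm] using h.symm) z hz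

theorem exists_dist_lt_of_inner_pos {K : Set F} (hK : Convex ℝ K) {x y q : F} (hy : y ∈ K)
    (hq : q ∈ K) (h : 0 < ⟪x - y, q - y⟫) : ∃ w ∈ K, dist x w < dist x y := by
  by_contra! H
  have hyx : infDist x K = dist x y :=
    le_antisymm (infDist_le_dist_of_mem hy) ((le_infDist ⟨y, hy⟩).mpr H)
  exact (inner_sub_nonpos_of_infDist_eq_dist hK hy hyx hq).not_gt h

theorem mem_convexHull_erase_of_map_lt {E : Type*} [AddCommGroup E] [Module ℝ E] [DecidableEq E]
    {A : Finset E} {y a : E} (φ : E →ₗ[ℝ] ℝ) (hy : y ∈ convexHull ℝ (A : Set E))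
    (hφ : ∀ b ∈ A, φ b ≤ φ y) (ha : a ∈ A) (hlt : φ a < φ y) :
    y ∈ convexHull ℝ (A.erase a : Set E) := by
  obtain ⟨w, hw0, hw1, rfl⟩ := mem_convexHull'.mp hy
  have hzero : ∑ b ∈ A, w b * (φ (∑ c ∈ A, w c • c) - φ b) = 0 := by
    simp_rw [mul_sub, sum_sub_distrib, ← sum_mul, hw1, one_mul, map_sum, map_smul, smul_eq_mul,
      sub_self]
  have hwa : w a = 0 := by
    have := (sum_eq_zero_iff_of_nonneg fun b hb =>
      mul_nonneg (hw0 b hb) (sub_nonneg.mpr (hφ b hb))).mp hzero a ha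
    exact (mul_eq_zero.mp this).resolve_right (sub_pos.mpr hlt).ne'
  rw [coe_erase, ← Finset.coe_erase, mem_convexHull']
  refine ⟨w, fun b hb => hw0 b (mem_of_mem_erase hb), ?_, ?_⟩
  · rwa [sum_erase _ hwa]
  · rw [sum_erase _ (by rw [hwa, zero_smul])]

theorem eq_zero_of_inner_sub_eq_zero {s : Set F} (hs : vectorSpan ℝ s = ⊤) {u y : F}
    (h : ∀ a ∈ s, ⟪u, a - y⟫ = 0) : u = 0 := by
  have hle : vectorSpan ℝ s ≤ (ℝ ∙ u)ᗮ := by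
    rw [vectorSpan_def, Submodule.span_le]
    rintro _ ⟨a, ha, b, hb, rfl⟩
    rw [SetLike.mem_coe, Submodule.mem_orthogonal_singleton_iff_inner_right]
    change ⟪u, a - b⟫ = 0
    rw [← sub_sub_sub_cancel_right a b y, inner_sub_right, h a ha, h b hb, sub_zero]
  rwa [hs, top_le_iff, Submodule.orthogonal_eq_top_iff, Submodule.span_singleton_eq_bot] at hle

theorem exists_mem_convexHull_erase_of_inner_nonpos [FiniteDimensional ℝ F] [DecidableEq F]
    {A : Finset F} (hA : A.card = finrank ℝ F + 1) {x y : F} (hy : y ∈ convexHull ℝ (A : Set F))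
    (hxy : x ≠ y) (hA' : ∀ a ∈ A, ⟪x - y, a - y⟫ ≤ 0) :
    ∃ q ∈ A, y ∈ convexHull ℝ (A.erase q : Set F) := by
  by_cases hind : AffineIndependent ℝ ((↑) : A → F)
  · have hspan : vectorSpan ℝ (A : Set F) = ⊤ := by
      have := hind.affineSpan_eq_top_iff_card_eq_finrank_add_one.mpr (by simpa using hA)
      rw [Subtype.range_coe] at this
      rw [← direction_affineSpan, this, AffineSubspace.direction_top]
    obtain ⟨a, ha, hlt⟩ : ∃ a ∈ A, ⟪x - y, a - y⟫ < 0 := by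
      by_contra! h
      exact sub_ne_zero.mpr hxy (eq_zero_of_inner_sub_eq_zero hspan fun a ha =>
        le_antisymm (hA' a ha) (h a ha))
    refine ⟨a, ha, mem_convexHull_erase_of_map_lt (innerₛₗ ℝ (x - y)) hy (fun b hb => ?_) ha ?_⟩
    · rw [innerₛₗ_apply_apply, innerₛₗ_apply_apply, ← sub_nonpos, ← inner_sub_right]
      exact hA' b hb
    · rw [innerₛₗ_apply_apply, innerₛₗ_apply_apply, ← sub_neg, ← inner_sub_right]
      exact hlt
  · obtain ⟨⟨q, hq⟩, hyq⟩ := Caratheodory.mem_convexHull_erase hind hy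
    exact ⟨q, hq, hyq⟩

theorem not_affineIndependent_of_finrank_add_one_lt_card [FiniteDimensional ℝ F] {B : Finset F}
    (hB : finrank ℝ F + 1 < B.card) : ¬AffineIndependent ℝ ((↑) : B → F) := fun hind => by
  have := hind.card_le_finrank_succ
  have := Submodule.finrank_le (vectorSpan ℝ (Set.range ((↑) : B → F)))
  simp only [Fintype.card_coe] at *
  omega

section Exchange

variable {ι : Type*} [Fintype ι]

noncomputable def hullSqDist (S : ι → Finset F) (x : F) : ℝ :=
  ∑ i, infDist x (convexHull ℝ (S i : Set F)) ^ 2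

theorem hullSqDist_map_swap_lt [DecidableEq F] {S : ι → Finset F} (hS : Pairwise (Disjoint on S))
    {i j : ι} {p q x y w : F} (hp : p ∈ S j) (hq : q ∈ S i) (hij : i ≠ j)
    (hy : y ∈ convexHull ℝ ((S i).erase q : Set F))
    (hyx : dist x y ≤ infDist x (convexHull ℝ (S i : Set F)))
    (hw : w ∈ convexHull ℝ ((insert q (S j)).erase p : Set F))
    (hwx : dist x w < infDist x (convexHull ℝ (S j : Set F))) :
    hullSqDist (fun l => (S l).map (Equiv.swap p q).toEmbedding) x < hullSqDist S x := by
  set S' := fun l => (S l).map (Equiv.swap p q).toEmbedding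
  have hpi : p ∉ S i := disjoint_right.mp (hS hij) hp
  have hqj : q ∉ S j := disjoint_left.mp (hS hij) hq
  have hSi : ((S i).erase q : Set F) ⊆ S' i := by
    rw [coe_map, Equiv.coe_toEmbedding, Equiv.swap_comm, Equiv.image_swap_of_mem_of_notMem hq hpi,
      coe_erase]
    exact Set.sdiff_subset_sdiff_left (Set.subset_insert _ _)
  have hSj : ((insert q (S j)).erase p : Set F) = S' j := by
    rw [coe_map, Equiv.coe_toEmbedding, Equiv.image_swap_of_mem_of_notMem hp hqj, coe_erase,
      coe_insert]
  have hj : infDist x (convexHull ℝ (S' j : Set F)) < infDist x (convexHull ℝ (S j : Set F)) :=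
    (infDist_le_dist_of_mem (hSj ▸ hw)).trans_lt hwx
  have hle (l) :
      infDist x (convexHull ℝ (S' l : Set F)) ≤ infDist x (convexHull ℝ (S l : Set F)) := by
    rcases eq_or_ne l i with rfl | hli
    · exact (infDist_le_dist_of_mem (convexHull_mono hSi hy)).trans hyx
    rcases eq_or_ne l j with rfl | hlj
    · exact hj.le
    · rw [show S' l = S l from
        map_swap_eq_self (disjoint_right.mp (hS hlj) hp) (disjoint_right.mp (hS hli) hq)]
  exact sum_lt_sum (fun l _ => pow_le_pow_left₀ infDist_nonneg (hle l) 2)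
    ⟨j, mem_univ _, pow_lt_pow_left₀ hj infDist_nonneg two_ne_zero⟩

variable [FiniteDimensional ℝ F] {X : Finset F} {S : ι → Finset F}

theorem exists_hullSqDist_lt (hS : IsUniformPartition X (finrank ℝ F + 1) S) {x : F} {y : ι → F}
    (hy : ∀ i, y i ∈ convexHull ℝ (S i : Set F))
    (hyx : ∀ i, infDist x (convexHull ℝ (S i : Set F)) = dist x (y i))
    (hsum : ∑ i, (x - y i) = 0) {i₀ : ι} (hne : x ≠ y i₀) :
    ∃ S' : ι → Finset F,
      IsUniformPartition X (finrank ℝ F + 1) S' ∧ hullSqDist S' x < hullSqDist S x := by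
  classical
  have hproj (i) {z} (hz : z ∈ S i) : ⟪x - y i, z - y i⟫ ≤ 0 :=
    inner_sub_nonpos_of_infDist_eq_dist (convex_convexHull ℝ _) (hy i) (hyx i)
      (subset_convexHull ℝ _ hz)
  have hsplit (i) (q : F) : ⟪x - y i, q - y i⟫ = ⟪x - y i, q - x⟫ + ‖x - y i‖ ^ 2 := by
    rw [← real_inner_self_eq_norm_sq, ← inner_add_right, sub_add_sub_cancel]
  obtain ⟨q, hq, hyq⟩ := exists_mem_convexHull_erase_of_inner_nonpos (hS.card_eq i₀) (hy i₀) hne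
    fun a ha => hproj i₀ ha
  have hi₀ : ⟪x - y i₀, q - x⟫ < 0 := by
    have := norm_pos_iff.mpr (sub_ne_zero.mpr hne)
    nlinarith [hsplit i₀ q, hproj i₀ hq]
  obtain ⟨j, hj⟩ : ∃ j, 0 < ⟪x - y j, q - x⟫ := by
    by_contra! h
    have := sum_lt_sum (fun i _ => h i) ⟨i₀, mem_univ _, hi₀⟩
    rw [← sum_inner, hsum, inner_zero_left, sum_const_zero] at this
    exact this.false
  have hji₀ : j ≠ i₀ := by
    rintro rfl
    exact hj.not_gt hi₀
  have hqj : q ∉ S j := disjoint_left.mp (hS.pairwise_disjoint hji₀.symm) hq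
  obtain ⟨w, hw, hwx⟩ := exists_dist_lt_of_inner_pos (convex_convexHull ℝ _)
    (convexHull_mono (coe_subset.mpr (subset_insert q (S j))) (hy j))
    (subset_convexHull ℝ _ (mem_insert_self q (S j)))
    (by nlinarith [hsplit j q, norm_nonneg (x - y j)])
  have hcard : finrank ℝ F + 1 < (insert q (S j)).card := by
    rw [card_insert_of_notMem hqj, hS.card_eq]
    omega
  obtain ⟨⟨p, hp⟩, hwp⟩ :=
    Caratheodory.mem_convexHull_erase (not_affineIndependent_of_finrank_add_one_lt_card hcard) hw
  have hpq : p ≠ q := by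
    rintro rfl
    rw [erase_insert hqj] at hwp
    exact (hyx j ▸ infDist_le_dist_of_mem hwp).not_gt hwx
  have hpj : p ∈ S j := (mem_insert.mp hp).resolve_left hpq
  exact ⟨_, hS.map_swap (hS.subset j hpj) (hS.subset i₀ hq),
    hullSqDist_map_swap_lt hS.pairwise_disjoint hpj hq hji₀.symm hyq (hyx i₀).ge hwp
      (hyx j ▸ hwx)⟩

theorem mem_convexHull_of_forall_hullSqDist_le (hS : IsUniformPartition X (finrank ℝ F + 1) S)
    {x : F}
    (hx : ∀ z, hullSqDist S x ≤ hullSqDist S z)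
    (hS' : ∀ S' : ι → Finset F,
      IsUniformPartition X (finrank ℝ F + 1) S' → hullSqDist S x ≤ hullSqDist S' x)
    (i : ι) : x ∈ convexHull ℝ (S i : Set F) := by
  have hne (i) : (convexHull ℝ (S i : Set F)).Nonempty :=
    (coe_nonempty.mpr (hS.nonempty i)).convexHull
  choose y hy hyx using fun i =>
    ((S i).finite_toSet.isCompact_convexHull (𝕜 := ℝ)).exists_infDist_eq_dist (hne i) x
  have hsum : ∑ i, (x - y i) = 0 := sum_sub_eq_zero_of_forall_sum_norm_sub_sq_le fun z => calc
    ∑ i, ‖x - y i‖ ^ 2 = hullSqDist S x := by simp only [hullSqDist, hyx, dist_eq_norm]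
    _ ≤ hullSqDist S z := hx z
    _ ≤ ∑ i, ‖z - y i‖ ^ 2 := sum_le_sum fun i _ => pow_le_pow_left₀ infDist_nonneg
        ((infDist_le_dist_of_mem (hy i)).trans_eq (dist_eq_norm _ _)) 2
  by_contra hxi
  obtain ⟨S', hS'', hlt⟩ := exists_hullSqDist_lt hS hy hyx hsum fun h => hxi (h ▸ hy i)
  exact (hS' S' hS'').not_gt hlt

end Exchange

theorem frick_soberon_general (r d : ℕ)
    (X : Finset (EuclideanSpace ℝ (Fin d))) (hX : X.card = r * (d + 1)) :
    ∃ S : Fin r → Finset (EuclideanSpace ℝ (Fin d)),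
      (∀ i, S i ⊆ X) ∧
      (∀ i j, i ≠ j → Disjoint (S i) (S j)) ∧
      (∀ x ∈ X, ∃ i, x ∈ S i) ∧
      (∀ i, (S i).card = d + 1) ∧
      ∃ p : EuclideanSpace ℝ (Fin d),
        ∀ i, p ∈ convexHull ℝ ((S i : Set (EuclideanSpace ℝ (Fin d)))) := by
  have hd : finrank ℝ (EuclideanSpace ℝ (Fin d)) = d := finrank_euclideanSpace_fin
  let P := {S : Fin r → Finset (EuclideanSpace ℝ (Fin d)) |
    IsUniformPartition X (finrank ℝ (EuclideanSpace ℝ (Fin d)) + 1) S}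
  have hmin (S) (hS : S ∈ P) : ∃ x, ∀ z, hullSqDist S x ≤ hullSqDist S z :=
    exists_forall_sum_infDist_sq_le (fun i => (coe_nonempty.mpr (hS.nonempty i)).convexHull)
      fun i => ((S i).finite_toSet.isCompact_convexHull (𝕜 := ℝ)).isBounded
  choose! x hx using hmin
  obtain ⟨S₀, hS₀⟩ : P.Nonempty :=
    IsUniformPartition.exists_of_card_eq (by rw [hX, hd, Fintype.card_fin])
  obtain ⟨S, hS, hSmin⟩ := Set.exists_min_image P (fun S => hullSqDist S (x S))
    IsUniformPartition.setOf_finite ⟨S₀, hS₀⟩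
  refine ⟨S, hS.subset, fun i j hij => hS.pairwise_disjoint hij, hS.exists_mem,
    fun i => by rw [hS.card_eq, hd], x S, mem_convexHull_of_forall_hullSqDist_le hS (hx S hS) ?_⟩
  exact fun S' hS' => (hSmin S' hS').trans (hx S' hS' (x S))

/-- **The theorem of Frick and Soberón.** Any set of `r(d+1)` points in `ℝ^d` can be
partitioned into `r` pairwise disjoint parts, each of size exactly `d+1`, whose convex
hulls have a point in common. -/
theorem frick_soberon (r d : ℕ) (hr : 1 ≤ r) (hd : 1 ≤ d)
    (X : Finset (EuclideanSpace ℝ (Fin d))) (hX : X.card = r * (d + 1)) :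
    ∃ S : Fin r → Finset (EuclideanSpace ℝ (Fin d)),
      (∀ i, S i ⊆ X) ∧
      (∀ i j, i ≠ j → Disjoint (S i) (S j)) ∧
      (∀ x ∈ X, ∃ i, x ∈ S i) ∧
      (∀ i, (S i).card = d + 1) ∧
      ∃ p : EuclideanSpace ℝ (Fin d),
        ∀ i, p ∈ convexHull ℝ ((S i : Set (EuclideanSpace ℝ (Fin d)))) :=
  frick_soberon_general r d X hX
end

section
/- Let C_1, C_2, ..., C_{d+1} be pairwise disjoint subsets of ℝ^d, each of size 2. Then there exist two disjoint multicolored sets S_1 and S_2 — that is, sets with |S_1 ∩ C_i| = |S_2 ∩ C_i| = 1 for every i = 1, ..., d+1 and S_1 ∩ S_2 = ∅ — such that conv S_1 ∩ conv S_2 ≠ ∅. -/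
open scoped Classical

/-- **Lovász's theorem that `T(2,d) = 2`** for the colorful Tverberg problem. Given `d+1`
pairwise disjoint color classes in `ℝ^d`, each of size `2`, there are two disjoint
multicolored (rainbow) sets `S₁, S₂` — each containing exactly one point of every color
class — whose convex hulls intersect. -/
theorem lovasz_colorful_tverberg (d : ℕ) (hd : 1 ≤ d)
    (C : Fin (d + 1) → Finset (EuclideanSpace ℝ (Fin d)))
    (hdisj : ∀ i j, i ≠ j → Disjoint (C i) (C j))
    (hcard : ∀ i, (C i).card = 2) :
    ∃ S₁ S₂ : Finset (EuclideanSpace ℝ (Fin d)),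
      Disjoint S₁ S₂ ∧
      S₁.card = d + 1 ∧ S₂.card = d + 1 ∧
      (∀ i, (S₁ ∩ C i).card = 1 ∧ (S₂ ∩ C i).card = 1) ∧
      (convexHull ℝ (S₁ : Set (EuclideanSpace ℝ (Fin d))) ∩
        convexHull ℝ (S₂ : Set (EuclideanSpace ℝ (Fin d)))).Nonempty := by
  classical
  have hab : ∀ i, ∃ x y : EuclideanSpace ℝ (Fin d), x ≠ y ∧ C i = {x, y} := fun i =>
    Finset.card_eq_two.mp (hcard i)
  choose a b hne hC using hab
  have haC : ∀ i, a i ∈ C i := fun i => by rw [hC i]; simp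
  have hbC : ∀ i, b i ∈ C i := fun i => by rw [hC i]; simp
  -- linear dependence of the difference vectors
  have hdep : ¬ LinearIndependent ℝ (fun i : Fin (d + 1) => a i - b i) := by
    intro h
    have h1 := h.fintype_card_le_finrank
    rw [Fintype.card_fin, finrank_euclideanSpace_fin] at h1
    omega
  obtain ⟨c, hsum, i₀, hi₀⟩ := Fintype.not_linearIndependent_iff.mp hdep
  set p : Fin (d + 1) → EuclideanSpace ℝ (Fin d) := fun i => if 0 ≤ c i then a i else b i with hp
  set q : Fin (d + 1) → EuclideanSpace ℝ (Fin d) := fun i => if 0 ≤ c i then b i else a i with hq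
  have hpC : ∀ i, p i ∈ C i := fun i => by
    by_cases h : 0 ≤ c i <;> simp [hp, h, haC i, hbC i]
  have hqC : ∀ i, q i ∈ C i := fun i => by
    by_cases h : 0 ≤ c i <;> simp [hq, h, haC i, hbC i]
  have hpq : ∀ i, p i ≠ q i := fun i => by
    by_cases h : 0 ≤ c i <;> simp [hp, hq, h, hne i, (hne i).symm]
  have hcross : ∀ i j : Fin (d + 1), i ≠ j → ∀ x ∈ C i, ∀ y ∈ C j, x ≠ y := by
    intro i j hij x hx y hy hxy
    exact (Finset.disjoint_left.mp (hdisj i j hij) hx) (hxy ▸ hy)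
  have hpinj : Function.Injective p := by
    intro i j hij
    by_contra hne'
    exact hcross i j hne' (p i) (hpC i) (p j) (hpC j) hij
  have hqinj : Function.Injective q := by
    intro i j hij
    by_contra hne'
    exact hcross i j hne' (q i) (hqC i) (q j) (hqC j) hij
  set S₁ : Finset (EuclideanSpace ℝ (Fin d)) := Finset.image p Finset.univ with hS₁
  set S₂ : Finset (EuclideanSpace ℝ (Fin d)) := Finset.image q Finset.univ with hS₂
  have hS₁card : S₁.card = d + 1 := by
    rw [hS₁, Finset.card_image_of_injective _ hpinj, Finset.card_univ, Fintype.card_fin]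
  have hS₂card : S₂.card = d + 1 := by
    rw [hS₂, Finset.card_image_of_injective _ hqinj, Finset.card_univ, Fintype.card_fin]
  have hDisj : Disjoint S₁ S₂ := by
    rw [Finset.disjoint_left]
    intro x hx hx'
    rw [hS₁, Finset.mem_image] at hx
    rw [hS₂, Finset.mem_image] at hx'
    obtain ⟨i, -, rfl⟩ := hx
    obtain ⟨j, -, hj⟩ := hx'
    rcases eq_or_ne i j with rfl | hij
    · exact hpq i hj.symm
    · exact hcross j i hij.symm (q j) (hqC j) (p i) (hpC i) hj
  have hinter : ∀ (f : Fin (d + 1) → EuclideanSpace ℝ (Fin d)), (∀ i, f i ∈ C i) →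
      ∀ i, (Finset.image f Finset.univ ∩ C i) = {f i} := by
    intro f hf i
    ext x
    simp only [Finset.mem_inter, Finset.mem_image, Finset.mem_univ, true_and,
      Finset.mem_singleton]
    constructor
    · rintro ⟨⟨j, rfl⟩, hx⟩
      rcases eq_or_ne j i with rfl | hij
      · rfl
      · exact absurd rfl (hcross j i hij (f j) (hf j) (f j) hx)
    · rintro rfl
      exact ⟨⟨i, rfl⟩, hf i⟩
  -- the common point
  set w : Fin (d + 1) → ℝ := fun i => |c i| with hw
  have hw0 : ∀ i ∈ Finset.univ, 0 ≤ w i := fun i _ => abs_nonneg _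
  have hwpos : 0 < ∑ i, w i := by
    apply Finset.sum_pos' hw0
    exact ⟨i₀, Finset.mem_univ _, abs_pos.mpr hi₀⟩
  have hkey : ∑ i, w i • p i = ∑ i, w i • q i := by
    have hterm : ∀ i : Fin (d + 1), w i • p i - w i • q i = c i • (a i - b i) := by
      intro i
      by_cases h : 0 ≤ c i
      · simp [hw, hp, hq, h, abs_of_nonneg h, smul_sub]
      · push_neg at h
        simp [hw, hp, hq, not_le.mpr h, abs_of_neg h, smul_sub, neg_smul]
        module
    have h0 : ∑ i, (w i • p i - w i • q i) = 0 := by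
      simp_rw [hterm]; exact hsum
    rw [Finset.sum_sub_distrib, sub_eq_zero] at h0
    exact h0
  have hcm : Finset.univ.centerMass w p = Finset.univ.centerMass w q := by
    rw [Finset.centerMass, Finset.centerMass, hkey]
  refine ⟨S₁, S₂, hDisj, hS₁card, hS₂card,
    fun i => ⟨by rw [hinter p hpC i]; simp, by rw [hinter q hqC i]; simp⟩,
    ⟨Finset.univ.centerMass w p, ?_, ?_⟩⟩
  · exact Finset.centerMass_mem_convexHull _ hw0 hwpos
      (fun i _ => by exact Finset.mem_coe.mpr (by rw [hS₁]; exact Finset.mem_image_of_mem p (Finset.mem_univ i)))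
  · rw [hcm]
    exact Finset.centerMass_mem_convexHull _ hw0 hwpos
      (fun i _ => by exact Finset.mem_coe.mpr (by rw [hS₂]; exact Finset.mem_image_of_mem q (Finset.mem_univ i)))
end
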